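/- arXiv:2012.05145 — 7 statements merged into one kernel-verified Lean document; each statement's English description precedes it below -/
import Mathlib

section
/- If G is an ℓ-regular graph with ℓ odd, and D is a decomposition of G into trails each having exactly ℓ edges, then every vertex of G has odd degree in exactly one element of D. -/
open SimpleGraph Finset

private lemma count_parity' {V : Type*} [DecidableEq V] {G : SimpleGraph V} {u w : V}
    (p : G.Walk u w) (v : V) :
    p.edges.countP (fun e => v ∈ e) % 2 =
      ((if v = u then 1 else 0) + (if v = w then 1 else 0)) % 2 := by
  induction p with
  | nil => split <;> simp
  | @cons a b c h q ih =>
    have hab : a ≠ b := h.ne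
    rw [Walk.edges_cons, List.countP_cons]
    have : (decide (v ∈ s(a, b)) : Bool) = decide (v = a ∨ v = b) := by
      simp [Sym2.mem_iff]
    rw [this]
    rcases eq_or_ne v a with rfl | hva <;> rcases eq_or_ne v b with rfl | hvb <;>
      simp_all <;> omega

private lemma finite_len' {V : Type*} [Fintype V] [DecidableEq V] {G : SimpleGraph V} (ℓ : ℕ)
    (D : Set (Σ u : V, Σ v : V, G.Walk u v)) (hlen : ∀ T ∈ D, T.2.2.length = ℓ) :
    D.Finite := by
  classical
  haveI : LocallyFinite G := fun v => (Set.toFinite _).fintype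
  have hsub : D ⊆ {T : Σ u : V, Σ v : V, G.Walk u v | T.2.2.length = ℓ} := hlen
  refine Set.Finite.subset ?_ hsub
  have e : {T : Σ u : V, Σ v : V, G.Walk u v | T.2.2.length = ℓ} ≃
      (Σ u : V, Σ v : V, {p : G.Walk u v // p.length = ℓ}) :=
    { toFun := fun T => ⟨T.1.1, T.1.2.1, T.1.2.2, T.2⟩
      invFun := fun T => ⟨⟨T.1, T.2.1, T.2.2.1⟩, T.2.2.2⟩
      left_inv := fun T => rfl
      right_inv := fun T => rfl }
  have : Finite {T : Σ u : V, Σ v : V, G.Walk u v | T.2.2.length = ℓ} := Finite.of_equiv _ e.symm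
  exact this

private lemma odd_card_filter_odd' {α : Type*} (s : Finset α) (f : α → ℕ)
    (h : Odd (∑ x ∈ s, f x)) : Odd (s.filter (fun x => Odd (f x))).card := by
  classical
  have h2 : (∑ x ∈ s, f x) % 2 = (∑ x ∈ s, f x % 2) % 2 := by
    rw [Finset.sum_nat_mod]
  have hsplit : (∑ x ∈ s, f x % 2) =
      ∑ x ∈ s.filter (fun x => Odd (f x)), f x % 2 +
      ∑ x ∈ s.filter (fun x => ¬ Odd (f x)), f x % 2 :=
    (Finset.sum_filter_add_sum_filter_not s _ _).symm
  have h3 : ∑ x ∈ s.filter (fun x => Odd (f x)), f x % 2 =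
      (s.filter (fun x => Odd (f x))).card := by
    rw [Finset.card_eq_sum_ones]
    refine Finset.sum_congr rfl fun x hx => ?_
    exact Nat.odd_iff.mp (Finset.mem_filter.mp hx).2
  have h4 : ∑ x ∈ s.filter (fun x => ¬ Odd (f x)), f x % 2 = 0 := by
    refine Finset.sum_eq_zero fun x hx => ?_
    have := (Finset.mem_filter.mp hx).2
    rw [Nat.not_odd_iff_even, Nat.even_iff] at this
    exact this
  rw [Nat.odd_iff] at h ⊢
  omega

/-- If `G` is an `ℓ`-regular graph with `ℓ` odd, and `D` is a decomposition of `G`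
into trails each having exactly `ℓ` edges, then every vertex of `G` has odd degree in exactly one
element of `D`. (The degree of `v` in a trail is the number of its edges incident to `v`.) -/
theorem stmt_0 {V : Type*} [Fintype V] [DecidableEq V]
    (G : SimpleGraph V) (ℓ : ℕ) (hodd : Odd ℓ)
    (hreg : ∀ v : V, (G.neighborSet v).ncard = ℓ)
    (D : Set (Σ u : V, Σ v : V, G.Walk u v))
    (htrails : ∀ T ∈ D, T.2.2.IsTrail ∧ T.2.2.length = ℓ)
    (hcover : ∀ e ∈ G.edgeSet, ∃! T, T ∈ D ∧ e ∈ T.2.2.edges) :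
    ∀ v : V, ∃! T, T ∈ D ∧ Odd (T.2.2.edges.countP (fun e => v ∈ e)) := by
  classical
  intro v
  have hD : D.Finite := finite_len' ℓ D (fun T hT => (htrails T hT).2)
  set Df : Finset (Σ u : V, Σ v : V, G.Walk u v) := hD.toFinset with hDf
  have hmemDf : ∀ T, T ∈ Df ↔ T ∈ D := fun T => hD.mem_toFinset
  -- classifier
  have hex : ∀ e : Sym2 V, ∃ T, e ∈ G.edgeSet → (T ∈ D ∧ e ∈ T.2.2.edges) := by
    intro e
    by_cases h : e ∈ G.edgeSet
    · obtain ⟨T, hT, _⟩ := hcover e h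
      exact ⟨T, fun _ => hT⟩
    · exact ⟨⟨v, v, Walk.nil⟩, fun h' => absurd h' h⟩
  choose f hf1 using hex
  have hf2 : ∀ e (h : e ∈ G.edgeSet) T, T ∈ D → e ∈ T.2.2.edges → f e = T := by
    intro e h T hT he
    obtain ⟨T', _, huniq⟩ := hcover e h
    rw [huniq (f e) (hf1 e h), huniq T ⟨hT, he⟩]
  -- fiber decomposition of any set of edges
  have fib : ∀ s : Finset (Sym2 V), (∀ e ∈ s, e ∈ G.edgeSet) →
      s.card = ∑ T ∈ Df, (s.filter (fun e => e ∈ T.2.2.edges)).card := by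
    intro s hs
    rw [Finset.card_eq_sum_card_fiberwise (f := f) (t := Df)
      (fun e he => (hmemDf _).mpr (hf1 e (hs e he)).1)]
    refine Finset.sum_congr rfl fun T hT => ?_
    congr 1
    refine Finset.filter_congr fun e he => ?_
    constructor
    · intro hfe
      rw [← hfe]
      exact (hf1 e (hs e he)).2
    · intro heT
      exact hf2 e (hs e he) T ((hmemDf T).mp hT) heT
  -- degree is ℓ
  have hdeg : ∀ w, G.degree w = ℓ := by
    intro w
    rw [← hreg w, ← card_neighborFinset_eq_degree, neighborFinset_def,
      Set.ncard_eq_toFinset_card']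
  have hℓpos : 0 < ℓ := hodd.pos
  -- count of edges at w in T, as card of a filtered finset
  have hcnt : ∀ T ∈ Df, ∀ w,
      ((G.edgeFinset.filter (fun e => w ∈ e)).filter (fun e => e ∈ T.2.2.edges)).card =
        T.2.2.edges.countP (fun e => w ∈ e) := by
    intro T hT w
    have hnd : T.2.2.edges.Nodup := (htrails T ((hmemDf T).mp hT)).1.edges_nodup
    have hset : (G.edgeFinset.filter (fun e => w ∈ e)).filter (fun e => e ∈ T.2.2.edges) =
        (T.2.2.edges.filter (fun e => w ∈ e)).toFinset := by
      ext e
      simp only [Finset.mem_filter, List.mem_toFinset, List.mem_filter, mem_edgeFinset,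
        decide_eq_true_eq]
      constructor
      · rintro ⟨⟨_, hw⟩, he⟩; exact ⟨he, hw⟩
      · rintro ⟨he, hw⟩
        exact ⟨⟨T.2.2.edges_subset_edgeSet he, hw⟩, he⟩
    rw [hset, List.toFinset_card_of_nodup (hnd.filter _), List.countP_eq_length_filter]
  -- key: for each w, the counts over trails sum to ℓ
  have key : ∀ w, ∑ T ∈ Df, T.2.2.edges.countP (fun e => w ∈ e) = ℓ := by
    intro w
    have h1 : (G.edgeFinset.filter (fun e => w ∈ e)).card = ℓ := by
      rw [← incidenceFinset_eq_filter, card_incidenceFinset_eq_degree, hdeg]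
    rw [← h1, fib _ (fun e he => by
      have := Finset.mem_filter.mp he
      exact mem_edgeFinset.mp this.1)]
    exact Finset.sum_congr rfl fun T hT => (hcnt T hT w).symm
  -- edge count: |E| = ℓ * |Df|
  have hE : G.edgeFinset.card = ℓ * Df.card := by
    rw [fib G.edgeFinset (fun e he => mem_edgeFinset.mp he)]
    rw [Finset.sum_congr rfl (fun T hT => ?_), Finset.sum_const, smul_eq_mul, mul_comm]
    have hnd : T.2.2.edges.Nodup := (htrails T ((hmemDf T).mp hT)).1.edges_nodup
    have hset : G.edgeFinset.filter (fun e => e ∈ T.2.2.edges) = T.2.2.edges.toFinset := by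
      ext e
      simp only [Finset.mem_filter, List.mem_toFinset, mem_edgeFinset]
      exact ⟨fun h => h.2, fun h => ⟨T.2.2.edges_subset_edgeSet h, h⟩⟩
    rw [hset, List.toFinset_card_of_nodup hnd, Walk.length_edges,
      (htrails T ((hmemDf T).mp hT)).2]
  -- handshake: card V = 2 * |Df|
  have hV : Fintype.card V = 2 * Df.card := by
    have h1 := G.sum_degrees_eq_twice_card_edges
    simp only [hdeg, Finset.sum_const, smul_eq_mul, Finset.card_univ, hE] at h1
    have h2 : Fintype.card V * ℓ = (2 * Df.card) * ℓ := by rw [h1]; ring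
    exact Nat.eq_of_mul_eq_mul_right hℓpos h2
  -- the set of trails with odd count at w
  set Odds : V → Finset (Σ u : V, Σ v : V, G.Walk u v) :=
    fun w => Df.filter (fun T => Odd (T.2.2.edges.countP (fun e => w ∈ e))) with hOdds
  have hodd_card : ∀ w, Odd (Odds w).card := by
    intro w
    exact odd_card_filter_odd' Df _ (by rw [key w]; exact hodd)
  have hge1 : ∀ w, 1 ≤ (Odds w).card := fun w => (hodd_card w).pos
  -- per trail, at most 2 vertices of odd count
  have hper : ∀ T ∈ Df, (Finset.univ.filter
      (fun w => Odd (T.2.2.edges.countP (fun e => w ∈ e)))).card ≤ 2 := by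
    intro T _
    have hsub : (Finset.univ.filter
        (fun w => Odd (T.2.2.edges.countP (fun e => w ∈ e)))) ⊆ {T.1, T.2.1} := by
      intro w hw
      have hw' := (Finset.mem_filter.mp hw).2
      rw [Nat.odd_iff] at hw'
      have hp := count_parity' T.2.2 w
      simp only [Finset.mem_insert, Finset.mem_singleton]
      by_contra hcon
      push_neg at hcon
      rw [if_neg hcon.1, if_neg hcon.2] at hp
      omega
    calc (Finset.univ.filter
        (fun w => Odd (T.2.2.edges.countP (fun e => w ∈ e)))).card
        ≤ ({T.1, T.2.1} : Finset V).card := Finset.card_le_card hsub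
      _ ≤ 2 := Finset.card_insert_le _ _ |>.trans (by simp)
  -- double counting
  have hdouble : ∑ w : V, (Odds w).card ≤ Fintype.card V := by
    have swap : ∑ w : V, (Odds w).card =
        ∑ T ∈ Df, (Finset.univ.filter
          (fun w => Odd (T.2.2.edges.countP (fun e => w ∈ e)))).card := by
      simp only [hOdds, Finset.card_filter]
      rw [Finset.sum_comm]
    rw [swap, hV]
    calc ∑ T ∈ Df, (Finset.univ.filter
          (fun w => Odd (T.2.2.edges.countP (fun e => w ∈ e)))).card
        ≤ ∑ _T ∈ Df, 2 := Finset.sum_le_sum hper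
      _ = 2 * Df.card := by rw [Finset.sum_const, smul_eq_mul, mul_comm]
  -- conclude each Odds w has card 1
  have hone : (Odds v).card = 1 := by
    by_contra hne
    have h2 : 2 ≤ (Odds v).card := by
      have := hge1 v; omega
    have : ∑ w : V, (1 : ℕ) < ∑ w : V, (Odds w).card := by
      refine Finset.sum_lt_sum (fun w _ => hge1 w) ⟨v, Finset.mem_univ v, ?_⟩
      omega
    rw [Finset.sum_const, smul_eq_mul, mul_one, Finset.card_univ] at this
    omega
  obtain ⟨T₀, hT₀⟩ := Finset.card_eq_one.mp hone
  have hT₀mem := Finset.mem_filter.mp (hT₀ ▸ Finset.mem_singleton_self T₀)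
  refine ⟨T₀, ⟨(hmemDf T₀).mp hT₀mem.1, hT₀mem.2⟩, ?_⟩
  intro T' hT'
  have : T' ∈ Odds v := Finset.mem_filter.mpr ⟨(hmemDf T').mpr hT'.1, hT'.2⟩
  rw [hT₀] at this
  exact Finset.mem_singleton.mp this
end

section
/- Every 5-regular graph G that contains a spanning copy K of the complete bipartite graph K_{4,4} admits a decomposition into paths with 5 edges such that the middle edge of each path belongs to M = E(G) \ E(K). -/
/-!
Since `K ≅ K_{4,4}` is 4-regular and `G` is 5-regular, every vertex `v` has exactly one
`G`-neighbour `m v` outside `K`; `m` is a fixed-point-free involution and, as `v` and `m v` are not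
`K`-adjacent, it preserves the two sides of `K`. Every fixed-point-free involution of a 4-set is
conjugate to `(0 1)(2 3)`, so after relabelling each side of `K` the pair `(G, K)` becomes
isomorphic to the single model `K_{4,4} + {a₀a₁, a₂a₃, b₀b₁, b₂b₃}`. There four explicit paths
form the required decomposition, and such decompositions transport along isomorphisms.
-/

open SimpleGraph

/-- The paper's `M`-centred `P₅`-decomposition of `G`, with `M = E(G) \ E(K)`. -/
def IsCenteredP5Decomposition {V : Type*} (G K : SimpleGraph V)
    (D : Set (Σ u : V, Σ v : V, G.Walk u v)) : Prop :=
  (∀ T ∈ D, T.2.2.IsPath ∧ T.2.2.length = 5 ∧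
    ∃ e ∈ G.edgeSet \ K.edgeSet, T.2.2.edges[2]? = some e) ∧
  ∀ e ∈ G.edgeSet, ∃! T, T ∈ D ∧ e ∈ T.2.2.edges

theorem IsCenteredP5Decomposition.map {V W : Type*} {G K : SimpleGraph V}
    {G' K' : SimpleGraph W} (φ : G ≃g G') (hK : ∀ u v, K'.Adj (φ u) (φ v) ↔ K.Adj u v)
    {D : Set (Σ u : V, Σ v : V, G.Walk u v)} (hD : IsCenteredP5Decomposition G K D) :
    IsCenteredP5Decomposition G' K'
      ((fun T => ⟨φ T.1, φ T.2.1, T.2.2.map φ.toHom⟩) '' D) := by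
  refine ⟨?_, fun e he => ?_⟩
  · rintro _ ⟨T, hT, rfl⟩
    obtain ⟨hpath, hlen, e, ⟨heG, heK⟩, hmid⟩ := hD.1 T hT
    refine ⟨hpath.map φ.injective, by simp [hlen], e.map φ, ⟨φ.map_mem_edgeSet_iff.2 heG, ?_⟩,
      by simp [Walk.edges_map, hmid]⟩
    induction e using Sym2.ind with
    | _ u v => simpa [hK] using heK
  · obtain ⟨T, ⟨hT, heT⟩, huniq⟩ := hD.2 (e.map φ.symm) (φ.symm.map_mem_edgeSet_iff.2 he)
    refine ⟨_, ⟨⟨T, hT, rfl⟩, ?_⟩, ?_⟩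
    · simp only [Walk.edges_map, List.mem_map]
      exact ⟨_, heT, by simp [Sym2.map_map]⟩
    · rintro _ ⟨⟨T', hT', rfl⟩, heT'⟩
      simp only [Walk.edges_map, List.mem_map] at heT'
      obtain ⟨a, ha, rfl⟩ := heT'
      rw [huniq T' ⟨hT', by simpa [Sym2.map_map] using ha⟩]

theorem existsUnique_adj_not_adj {V : Type*} [Finite V] {G K : SimpleGraph V} (hKG : K ≤ G)
    {v : V} (h : (G.neighborSet v).ncard = (K.neighborSet v).ncard + 1) :
    ∃! u, G.Adj v u ∧ ¬K.Adj v u := by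
  have hsub : K.neighborSet v ⊆ G.neighborSet v := fun _ hu => hKG hu
  obtain ⟨u, hu⟩ : ∃ u, G.neighborSet v \ K.neighborSet v = {u} := by
    rw [← Set.ncard_eq_one, Set.ncard_sdiff hsub, h, Nat.add_sub_cancel_left]
  exact ⟨u, (Set.ext_iff.1 hu u).2 rfl, fun w hw => (Set.ext_iff.1 hu w).1 hw⟩

instance {α β : Type*} : DecidableRel (completeBipartiteGraph α β).Adj :=
  fun _ _ => inferInstanceAs (Decidable (_ ∨ _))

theorem ncard_neighborSet_completeBipartiteGraph_fin_four (x : Fin 4 ⊕ Fin 4) :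
    ((completeBipartiteGraph (Fin 4) (Fin 4)).neighborSet x).ncard = 4 := by
  rw [Set.ncard_eq_toFinset_card']
  revert x
  decide

def pairSwap : Equiv.Perm (Fin 4) := Equiv.swap 0 1 * Equiv.swap 2 3

theorem exists_perm_conj_pairSwap {σ : Fin 4 → Fin 4} (hfix : ∀ i, σ i ≠ i)
    (hσ : Function.Involutive σ) : ∃ π : Equiv.Perm (Fin 4), ∀ i, σ (π i) = π (pairSwap i) := by
  have key : ∀ τ : Equiv.Perm (Fin 4), (∀ i, τ i ≠ i) → (∀ i, τ (τ i) = i) →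
      ∃ π : Equiv.Perm (Fin 4), ∀ i, τ (π i) = π (pairSwap i) := by
    decide
  exact key (hσ.toPerm σ) hfix hσ

theorem exists_sumMap_conj_pairSwap {p : Fin 4 ⊕ Fin 4 → Fin 4 ⊕ Fin 4}
    (hside : ∀ x, ¬(completeBipartiteGraph (Fin 4) (Fin 4)).Adj x (p x))
    (hfix : ∀ x, p x ≠ x) (hp : Function.Involutive p) :
    ∃ π₁ π₂ : Equiv.Perm (Fin 4), ∀ x,
      p (Sum.map π₁ π₂ x) = Sum.map π₁ π₂ (Sum.map pairSwap pairSwap x) := by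
  have hl : ∀ i, ∃ j, p (.inl i) = .inl j := fun i => by
    rcases h : p (.inl i) with j | j
    · exact ⟨j, rfl⟩
    · exact absurd (h ▸ hside (.inl i)) (by simp)
  have hr : ∀ i, ∃ j, p (.inr i) = .inr j := fun i => by
    rcases h : p (.inr i) with j | j
    · exact absurd (h ▸ hside (.inr i)) (by simp)
    · exact ⟨j, rfl⟩
  choose σ hσ using hl
  choose τ hτ using hr
  obtain ⟨π₁, h₁⟩ := exists_perm_conj_pairSwap (σ := σ)
    (fun i h => hfix _ (by rw [hσ, h]))
    (fun i => Sum.inl_injective (by rw [← hσ, ← hσ, hp]))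
  obtain ⟨π₂, h₂⟩ := exists_perm_conj_pairSwap (σ := τ)
    (fun i h => hfix _ (by rw [hτ, h]))
    (fun i => Sum.inr_injective (by rw [← hτ, ← hτ, hp]))
  refine ⟨π₁, π₂, ?_⟩
  rintro (i | i) <;> simp [hσ, hτ, h₁, h₂]

def pairMatching : SimpleGraph (Fin 4 ⊕ Fin 4) where
  Adj x y := y = Sum.map pairSwap pairSwap x
  symm := ⟨by decide⟩
  loopless := ⟨by decide⟩

instance : DecidableRel pairMatching.Adj := fun x y => decEq y (Sum.map pairSwap pairSwap x)

abbrev modelGraph : SimpleGraph (Fin 4 ⊕ Fin 4) :=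
  completeBipartiteGraph (Fin 4) (Fin 4) ⊔ pairMatching

theorem exists_iso_modelGraph {V : Type*} {G K : SimpleGraph V} (hKG : K ≤ G)
    (φ : K ≃g completeBipartiteGraph (Fin 4) (Fin 4)) (hM : ∀ v, ∃! u, G.Adj v u ∧ ¬K.Adj v u) :
    ∃ χ : completeBipartiteGraph (Fin 4) (Fin 4) ≃g K,
      ∀ x y, G.Adj (χ x) (χ y) ↔ modelGraph.Adj x y := by
  choose m hm hm_unique using hM
  have hG : ∀ u v, G.Adj u v ↔ K.Adj u v ∨ v = m u := fun u v =>
    ⟨fun h => or_iff_not_imp_left.2 fun hK => hm_unique u v ⟨h, hK⟩,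
      fun h => h.elim (fun h => hKG h) (fun h => h ▸ (hm u).1)⟩
  have hmm : Function.Involutive m := fun v =>
    (hm_unique _ _ ⟨(hm v).1.symm, fun h => (hm v).2 h.symm⟩).symm
  obtain ⟨π₁, π₂, hπ⟩ := exists_sumMap_conj_pairSwap (p := fun x => φ (m (φ.symm x)))
    (fun x => by simpa [← φ.map_adj_iff] using (hm (φ.symm x)).2)
    (fun x h => (hm (φ.symm x)).1.ne (by simpa using (congrArg φ.symm h).symm))
    (fun x => by simp [hmm _])
  refine ⟨(completeBipartiteGraphCongr π₁ π₂).trans φ.symm, fun x y => ?_⟩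
  rw [hG, Iso.map_adj_iff, sup_adj]
  refine or_congr Iff.rfl ?_
  change _ = _ ↔ y = Sum.map pairSwap pairSwap x
  simp only [RelIso.trans_apply, completeBipartiteGraphCongr_apply, RelIso.symm_apply_eq]
  rw [hπ]
  exact (Sum.map_injective.2 ⟨π₁.injective, π₂.injective⟩).eq_iff

def modelPath (a b c d e f : Fin 4 ⊕ Fin 4) (hab : modelGraph.Adj a b := by decide)
    (hbc : modelGraph.Adj b c := by decide) (hcd : modelGraph.Adj c d := by decide)
    (hde : modelGraph.Adj d e := by decide) (hef : modelGraph.Adj e f := by decide) :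
    modelGraph.Walk a f :=
  .cons hab (.cons hbc (.cons hcd (.cons hde (.cons hef .nil))))

def modelPaths : Fin 4 → Σ u : Fin 4 ⊕ Fin 4, Σ v : Fin 4 ⊕ Fin 4, modelGraph.Walk u v :=
  ![⟨_, _, modelPath (.inl 2) (.inr 0) (.inl 0) (.inl 1) (.inr 1) (.inl 3)⟩,
    ⟨_, _, modelPath (.inl 0) (.inr 2) (.inl 2) (.inl 3) (.inr 3) (.inl 1)⟩,
    ⟨_, _, modelPath (.inr 2) (.inl 1) (.inr 0) (.inr 1) (.inl 0) (.inr 3)⟩,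
    ⟨_, _, modelPath (.inr 0) (.inl 3) (.inr 2) (.inr 3) (.inl 2) (.inr 1)⟩]

theorem isCenteredP5Decomposition_modelGraph :
    IsCenteredP5Decomposition modelGraph (completeBipartiteGraph (Fin 4) (Fin 4))
      (Set.range modelPaths) := by
  have hpaths : ∀ k, (modelPaths k).2.2.support.Nodup ∧ (modelPaths k).2.2.length = 5 ∧
      ∃ x y, (modelGraph.Adj x y ∧ ¬(completeBipartiteGraph (Fin 4) (Fin 4)).Adj x y) ∧
        (modelPaths k).2.2.edges[2]? = some s(x, y) := by
    decide
  have hcover : ∀ x y, modelGraph.Adj x y → ∃ k, s(x, y) ∈ (modelPaths k).2.2.edges ∧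
      ∀ k', s(x, y) ∈ (modelPaths k').2.2.edges → k' = k := by
    decide
  refine ⟨?_, fun e he => ?_⟩
  · rintro _ ⟨k, rfl⟩
    obtain ⟨hnodup, hlen, x, y, hxy, hmid⟩ := hpaths k
    exact ⟨(Walk.isPath_def _).2 hnodup, hlen, s(x, y), hxy, hmid⟩
  · induction e using Sym2.ind with
    | _ x y =>
      obtain ⟨k, hk, huniq⟩ := hcover x y he
      exact ⟨modelPaths k, ⟨⟨k, rfl⟩, hk⟩, by rintro _ ⟨⟨k', rfl⟩, hk'⟩; rw [huniq k' hk']⟩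

/-- Every 5-regular graph `G` that contains a spanning copy `K` of the complete
bipartite graph `K_{4,4}` admits a decomposition into paths with 5 edges such that the middle
edge of each path belongs to `M = E(G) \ E(K)`. -/
theorem stmt_2 {V : Type*} [Fintype V]
    (G K : SimpleGraph V) (hKG : K ≤ G)
    (hK : Nonempty (K ≃g completeBipartiteGraph (Fin 4) (Fin 4)))
    (hreg : ∀ v : V, (G.neighborSet v).ncard = 5) :
    ∃ D : Set (Σ u : V, Σ v : V, G.Walk u v),
      (∀ T ∈ D, T.2.2.IsPath ∧ T.2.2.length = 5 ∧
        ∃ e ∈ G.edgeSet \ K.edgeSet, T.2.2.edges[2]? = some e) ∧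
      ∀ e ∈ G.edgeSet, ∃! T, T ∈ D ∧ e ∈ T.2.2.edges := by
  obtain ⟨φ⟩ := hK
  have hKdeg : ∀ v, (K.neighborSet v).ncard = 4 := fun v => by
    rw [← Set.ncard_image_of_injective _ φ.injective, φ.image_neighborSet,
      ncard_neighborSet_completeBipartiteGraph_fin_four]
  obtain ⟨χ, hχ⟩ := exists_iso_modelGraph hKG φ fun v =>
    existsUnique_adj_not_adj hKG (by rw [hreg, hKdeg])
  exact ⟨_, isCenteredP5Decomposition_modelGraph.map ⟨χ.toEquiv, hχ _ _⟩
    fun _ _ => χ.map_adj_iff⟩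
end

section
/- Let k < n/2 be positive integers. If G is a simple (2k+1)-regular graph on n vertices containing a spanning copy C of the k-th power of the cycle C_n, and M = E(G) \ E(C), then G admits an M-centered decomposition into paths with 2k+1 edges. -/
/-!
Transport `C` to `C_n^k`, where every edge `{x, x + r}` has a length `1 ≤ |r| ≤ k`. The arm at
a vertex `u` is the walk `u, u + 1, u - 1, u + 2, u - 2, …` with `k` steps; its steps have
lengths `1, 2, …, k`, so every edge of `C` lies on the arm of exactly one vertex. The vertices of
an arm are `u + z` with `z` in an interval of `k + 1` integers containing `0`, so if the arms at
`u` and `u'` meet then `u' - u` is a difference of two such `z`: either `u = u'` or `u` and `u'`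
are `C`-adjacent. As `2k < n`, `C` is `2k`-regular and `M = G \ C` is a perfect matching; for
each edge `vw` of `M` the arm at `v`, the edge `vw` and the arm at `w` form a path with `2k + 1`
edges and middle edge `vw`, and one such path per edge of `M` decomposes `G`.
-/

open SimpleGraph

/-- The `k`-th power of the cycle on `n` vertices: vertices are `ZMod n`, and `x` is adjacent
to `y` iff `x - y ≡ r (mod n)` for some integer `r` with `1 ≤ |r| ≤ k` (the condition
`|r| ≥ 1` is forced by `x ≠ y`). -/
def cyclePower (n k : ℕ) : SimpleGraph (ZMod n) where
  Adj x y := x ≠ y ∧ ∃ r : ℤ, r.natAbs ≤ k ∧ x - y = (r : ZMod n)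
  symm := by
    constructor
    rintro x y ⟨hxy, r, hr, h⟩
    exact ⟨hxy.symm, -r, by simpa using hr, by rw [Int.cast_neg, ← h, neg_sub]⟩
  loopless := by constructor; rintro x ⟨h, -⟩; exact h rfl

def SimpleGraph.Walk.ofSeq {V : Type*} {G : SimpleGraph V} (p : ℕ → V) :
    (j : ℕ) → (∀ i < j, G.Adj (p (i + 1)) (p i)) → G.Walk (p j) (p 0)
  | 0, _ => .nil
  | j + 1, h => .cons (h j j.lt_succ_self) (ofSeq p j fun i hi => h i (Nat.lt_succ_of_lt hi))

namespace SimpleGraph.Walk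

variable {V : Type*} {G : SimpleGraph V} (p : ℕ → V)

@[simp]
lemma length_ofSeq (j : ℕ) (h : ∀ i < j, G.Adj (p (i + 1)) (p i)) :
    (ofSeq p j h).length = j := by
  induction j with
  | zero => rfl
  | succ j ih => simp [ofSeq, ih]

lemma support_ofSeq (j : ℕ) (h : ∀ i < j, G.Adj (p (i + 1)) (p i)) :
    (ofSeq p j h).support = (List.range (j + 1)).reverse.map p := by
  induction j with
  | zero => rfl
  | succ j ih => simp [ofSeq, ih, List.range_succ]

lemma edges_ofSeq (j : ℕ) (h : ∀ i < j, G.Adj (p (i + 1)) (p i)) :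
    (ofSeq p j h).edges = (List.range j).reverse.map fun i => s(p (i + 1), p i) := by
  induction j with
  | zero => rfl
  | succ j ih => simp [ofSeq, ih, List.range_succ]

end SimpleGraph.Walk

lemma exists_sdiff_adj_iff_eq {V : Type*} {G C : SimpleGraph V} (hCG : C ≤ G)
    (hdeg : ∀ v, (G.neighborSet v).ncard = (C.neighborSet v).ncard + 1) :
    ∃ f : V → V, ∀ v w, (G \ C).Adj v w ↔ w = f v := by
  have hsingle : ∀ v, ∃ w, G.neighborSet v \ C.neighborSet v = {w} := by
    intro v
    have hfin : (G.neighborSet v).Finite := Set.finite_of_ncard_pos (by rw [hdeg]; omega)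
    have hsub : C.neighborSet v ⊆ G.neighborSet v := fun w hw => hCG hw
    rw [← Set.ncard_eq_one, Set.ncard_sdiff hsub (hfin.subset hsub), hdeg]
    omega
  choose f hf using hsingle
  refine ⟨f, fun v w => ?_⟩
  rw [← Set.mem_singleton_iff, ← hf v]
  rfl

lemma exists_set_mem_iff_apply_notMem {V : Type*} {f : V → V} (hf : Function.Involutive f)
    (hfix : ∀ v, f v ≠ v) : ∃ S : Set V, ∀ v, v ∈ S ↔ f v ∉ S := by
  let _ : LinearOrder V := WellOrderingRel.isWellOrder.linearOrder
  refine ⟨{v | f v < v}, fun v => ?_⟩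
  change f v < v ↔ ¬ f (f v) < f v
  rw [hf v, not_lt]
  exact ⟨le_of_lt, fun h => lt_of_le_of_ne h (hfix v)⟩

structure SimpleGraph.ArmDecomposition {V : Type*} (C : SimpleGraph V) (k : ℕ) where
  arm : V → ℕ → V
  arm_zero (u : V) : arm u 0 = u
  adj_arm {u : V} {i : ℕ} (hi : i < k) : C.Adj (arm u (i + 1)) (arm u i)
  injOn_arm (u : V) : Set.InjOn (arm u) (Set.Iic k)
  eq_or_adj_of_arm_eq {u u' : V} {i i' : ℕ} (hi : i ≤ k) (hi' : i' ≤ k)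
    (h : arm u i = arm u' i') : u = u' ∨ C.Adj u u'
  exists_arm_edge_eq {x y : V} (h : C.Adj x y) :
    ∃ u, ∃ i < k, s(arm u (i + 1), arm u i) = s(x, y)
  eq_of_arm_edge_eq {u u' : V} {i i' : ℕ} (hi : i < k) (hi' : i' < k)
    (h : s(arm u (i + 1), arm u i) = s(arm u' (i' + 1), arm u' i')) : u = u'

namespace SimpleGraph.ArmDecomposition

variable {V : Type*} {C G : SimpleGraph V} {k : ℕ}

section

variable (A : C.ArmDecomposition k)

def walk (u : V) : C.Walk (A.arm u k) u :=
  (Walk.ofSeq (A.arm u) k fun _ => A.adj_arm).copy rfl (A.arm_zero u)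

@[simp]
lemma length_walk (u : V) : (A.walk u).length = k := by
  simp [walk]

lemma mem_support_walk {u x : V} : x ∈ (A.walk u).support ↔ ∃ i ≤ k, A.arm u i = x := by
  simp [walk, Walk.support_ofSeq]

lemma mem_edges_walk {u : V} {e : Sym2 V} :
    e ∈ (A.walk u).edges ↔ ∃ i < k, s(A.arm u (i + 1), A.arm u i) = e := by
  simp [walk, Walk.edges_ofSeq]

lemma isPath_walk (u : V) : (A.walk u).IsPath := by
  rw [Walk.isPath_def, walk, Walk.support_copy, Walk.support_ofSeq, List.nodup_map_iff_inj_on]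
  · intro i hi i' hi' h
    simp only [List.mem_reverse, List.mem_range] at hi hi'
    exact A.injOn_arm u (Set.mem_Iic.2 (by omega)) (Set.mem_Iic.2 (by omega)) h
  · exact List.nodup_reverse.2 List.nodup_range

lemma exists_mem_edges_walk {e : Sym2 V} (he : e ∈ C.edgeSet) :
    ∃ u, e ∈ (A.walk u).edges := by
  induction e using Sym2.ind with
  | _ x y =>
  obtain ⟨u, i, hi, h⟩ := A.exists_arm_edge_eq he
  exact ⟨u, A.mem_edges_walk.2 ⟨i, hi, h⟩⟩

lemma eq_of_mem_edges_walk {u u' : V} {e : Sym2 V} (he : e ∈ (A.walk u).edges)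
    (he' : e ∈ (A.walk u').edges) : u = u' := by
  obtain ⟨i, hi, rfl⟩ := A.mem_edges_walk.1 he
  obtain ⟨i', hi', h⟩ := A.mem_edges_walk.1 he'
  exact A.eq_of_arm_edge_eq hi hi' h.symm

variable (hCG : C ≤ G)

def centredPath {v w : V} (h : G.Adj v w) : G.Walk (A.arm v k) (A.arm w k) :=
  ((A.walk v).mapLe hCG).append (.cons h ((A.walk w).mapLe hCG).reverse)

lemma length_centredPath {v w : V} (h : G.Adj v w) :
    (A.centredPath hCG h).length = 2 * k + 1 := by
  simp only [centredPath, Walk.length_append, Walk.length_cons, Walk.length_reverse,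
    Walk.length_mapLe, length_walk]
  ring

lemma edges_centredPath {v w : V} (h : G.Adj v w) :
    (A.centredPath hCG h).edges = (A.walk v).edges ++ s(v, w) :: (A.walk w).edges.reverse := by
  simp [centredPath]

lemma getElem?_edges_centredPath {v w : V} (h : G.Adj v w) :
    (A.centredPath hCG h).edges[k]? = some s(v, w) := by
  rw [edges_centredPath, List.getElem?_append_right (by simp)]
  simp

lemma mem_edges_centredPath {v w : V} (h : G.Adj v w) {e : Sym2 V} :
    e ∈ (A.centredPath hCG h).edges ↔
      e ∈ (A.walk v).edges ∨ e = s(v, w) ∨ e ∈ (A.walk w).edges := by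
  simp [edges_centredPath]

lemma isPath_centredPath {v w : V} (h : G.Adj v w) (hC : ¬ C.Adj v w) :
    (A.centredPath hCG h).IsPath := by
  rw [Walk.isPath_def, centredPath, Walk.support_append, Walk.support_cons, List.tail_cons,
    Walk.support_reverse, Walk.support_mapLe_eq_support, Walk.support_mapLe_eq_support]
  refine List.Nodup.append (A.isPath_walk v).support_nodup
    (List.nodup_reverse.2 (A.isPath_walk w).support_nodup) fun x hx hx' => ?_
  obtain ⟨i, hi, rfl⟩ := A.mem_support_walk.1 hx
  obtain ⟨i', hi', h'⟩ := A.mem_support_walk.1 (List.mem_reverse.1 hx')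
  rcases A.eq_or_adj_of_arm_eq hi hi' h'.symm with rfl | hvw
  · exact h.ne rfl
  · exact hC hvw

def ownedEdges (f : V → V) (u : V) : Set (Sym2 V) :=
  {e | e ∈ (A.walk u).edges ∨ e = s(u, f u)}

variable {A} {f : V → V}

lemma exists_mem_ownedEdges (hf : ∀ v w, (G \ C).Adj v w ↔ w = f v) {e : Sym2 V}
    (he : e ∈ G.edgeSet) : ∃ u, e ∈ A.ownedEdges f u := by
  by_cases heC : e ∈ C.edgeSet
  · obtain ⟨u, hu⟩ := A.exists_mem_edges_walk heC
    exact ⟨u, .inl hu⟩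
  · induction e using Sym2.ind with
    | _ x y => exact ⟨x, .inr (by rw [(hf x y).1 ⟨he, heC⟩])⟩

lemma partner_edge_eq_of_mem_ownedEdges (hCf : ∀ v, ¬ C.Adj v (f v)) {u u' : V} {e : Sym2 V}
    (h : e ∈ A.ownedEdges f u) (h' : e ∈ A.ownedEdges f u') : s(u, f u) = s(u', f u') := by
  rcases h with h | h <;> rcases h' with h' | h'
  · rw [A.eq_of_mem_edges_walk h h']
  · exact absurd ((A.walk u).edges_subset_edgeSet h) (by rw [h']; exact hCf u')
  · exact absurd ((A.walk u').edges_subset_edgeSet h') (by rw [h]; exact hCf u)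
  · exact h.symm.trans h'

lemma mem_edges_centredPath_iff (hff : Function.Involutive f) {v : V} (h : G.Adj v (f v))
    {e : Sym2 V} : e ∈ (A.centredPath hCG h).edges ↔
      ∃ u, e ∈ A.ownedEdges f u ∧ s(u, f u) = s(v, f v) := by
  have partner_edge : s(f v, f (f v)) = s(v, f v) := by rw [hff, Sym2.eq_swap]
  rw [mem_edges_centredPath]
  constructor
  · rintro (h | h | h)
    · exact ⟨v, .inl h, rfl⟩
    · exact ⟨v, .inr h, rfl⟩
    · exact ⟨f v, .inl h, partner_edge⟩
  · rintro ⟨u, hu, hm⟩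
    rcases Sym2.eq_iff.1 hm with ⟨rfl, -⟩ | ⟨rfl, -⟩
    · exact hu.imp_right .inl
    · rcases hu with h | h
      · exact .inr (.inr h)
      · exact .inr (.inl (h.trans partner_edge))

end

theorem exists_centred_decomposition (A : C.ArmDecomposition k) (hCG : C ≤ G) (f : V → V)
    (hf : ∀ v w, (G \ C).Adj v w ↔ w = f v) :
    ∃ D : Set (Σ u : V, Σ v : V, G.Walk u v),
      (∀ T ∈ D, T.2.2.IsPath ∧ T.2.2.length = 2 * k + 1 ∧
        ∃ e ∈ G.edgeSet \ C.edgeSet, T.2.2.edges[k]? = some e) ∧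
      ∀ e ∈ G.edgeSet, ∃! T, T ∈ D ∧ e ∈ T.2.2.edges := by
  have hGf v : G.Adj v (f v) := ((hf v (f v)).2 rfl).1
  have hCf v : ¬ C.Adj v (f v) := ((hf v (f v)).2 rfl).2
  have hff v : f (f v) = v := ((hf (f v) v).1 ⟨(hGf v).symm, fun h => hCf v h.symm⟩).symm
  let P v : Σ a b : V, G.Walk a b := ⟨_, _, A.centredPath hCG (hGf v)⟩
  obtain ⟨S, hS⟩ := exists_set_mem_iff_apply_notMem hff fun v => (hGf v).ne'
  have exists_mem_S u : ∃ v ∈ S, s(u, f u) = s(v, f v) := by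
    by_cases hu : u ∈ S
    · exact ⟨u, hu, rfl⟩
    · exact ⟨f u, (hS (f u)).2 (by rwa [hff]), by rw [hff, Sym2.eq_swap]⟩
  have eq_of_mem_S {v v'} (hv : v ∈ S) (hv' : v' ∈ S) (h : s(v, f v) = s(v', f v')) :
      v = v' := by
    rcases Sym2.eq_iff.1 h with ⟨h, -⟩ | ⟨rfl, -⟩
    · exact h
    · exact absurd hv ((hS v').1 hv')
  refine ⟨P '' S, ?_, ?_⟩
  · rintro _ ⟨v, -, rfl⟩
    exact ⟨A.isPath_centredPath hCG _ (hCf v), A.length_centredPath hCG _,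
      s(v, f v), ⟨hGf v, hCf v⟩, A.getElem?_edges_centredPath hCG _⟩
  · intro e he
    obtain ⟨u, hu⟩ := exists_mem_ownedEdges hf he
    obtain ⟨v, hv, huv⟩ := exists_mem_S u
    have he : e ∈ (P v).2.2.edges := (mem_edges_centredPath_iff hCG hff _).2 ⟨u, hu, huv⟩
    refine ⟨P v, ⟨⟨v, hv, rfl⟩, he⟩, ?_⟩
    rintro _ ⟨⟨v', hv', rfl⟩, he'⟩
    obtain ⟨u', hu', hm'⟩ := (mem_edges_centredPath_iff hCG hff _).1 he'
    have huu' := partner_edge_eq_of_mem_ownedEdges hCf hu hu'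
    rw [eq_of_mem_S hv hv' (huv.symm.trans (huu'.trans hm'))]

end SimpleGraph.ArmDecomposition

def zigzag (j : ℕ) : ℤ := if j % 2 = 0 then -((j / 2 : ℕ) : ℤ) else ((j + 1) / 2 : ℕ)

lemma zigzag_zero : zigzag 0 = 0 := rfl

lemma natAbs_zigzag_succ_sub (j : ℕ) : (zigzag (j + 1) - zigzag j).natAbs = j + 1 := by
  unfold zigzag; split_ifs <;> omega

lemma zigzag_injective : Function.Injective zigzag := by
  intro i i' h; unfold zigzag at h; split_ifs at h <;> omega

lemma natAbs_zigzag_sub_le {i i' m : ℕ} (hi : i ≤ m) (hi' : i' ≤ m) :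
    (zigzag i - zigzag i').natAbs ≤ m := by
  unfold zigzag; split_ifs <;> omega

lemma ZMod.intCast_inj_of_natAbs_sub_lt {n : ℕ} {a b : ℤ} (h : (a - b).natAbs < n) :
    (a : ZMod n) = b ↔ a = b := by
  refine ⟨fun hab => ?_, congrArg _⟩
  rw [ZMod.intCast_eq_intCast_iff_dvd_sub] at hab
  have := Int.eq_zero_of_dvd_of_natAbs_lt_natAbs hab
    (by rw [← Int.natAbs_neg, neg_sub]; simpa using h)
  omega

lemma cyclePower_adj_add_intCast {n k : ℕ} (hkn : k < n) (x : ZMod n) {r : ℤ} (hr : r ≠ 0)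
    (hrk : r.natAbs ≤ k) : (cyclePower n k).Adj (x + r) x := by
  refine ⟨fun h => hr ?_, r, hrk, by ring⟩
  have : ((r : ℤ) : ZMod n) = ((0 : ℤ) : ZMod n) := by simpa using h
  exact (ZMod.intCast_inj_of_natAbs_sub_lt (by omega)).1 this

lemma ncard_neighborSet_cyclePower {n k : ℕ} (hkn : 2 * k < n) (x : ZMod n) :
    ((cyclePower n k).neighborSet x).ncard = 2 * k := by
  have hnbr : (cyclePower n k).neighborSet x
      = (fun r : ℤ => x + r) '' (Set.Icc (-(k : ℤ)) k \ {0}) := by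
    ext y
    simp only [mem_neighborSet, Set.mem_image, Set.mem_sdiff, Set.mem_Icc,
      Set.mem_singleton_iff]
    constructor
    · rintro hxy
      obtain ⟨hne, r, hrk, hr⟩ := hxy.symm
      refine ⟨r, ⟨by omega, ?_⟩, by rw [← hr]; ring⟩
      rintro rfl
      exact hne (sub_eq_zero.mp (by simpa using hr))
    · rintro ⟨r, ⟨hr, hr0⟩, rfl⟩
      exact (cyclePower_adj_add_intCast (by omega) x hr0 (by omega)).symm
  rw [hnbr, Set.InjOn.ncard_image]
  · rw [Set.ncard_sdiff_singleton_of_mem (by simp only [Set.mem_Icc]; omega),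
      ← Finset.coe_Icc, Set.ncard_coe_finset, Int.card_Icc]
    omega
  · rintro r ⟨hr, -⟩ r' ⟨hr', -⟩ h
    simp only [Set.mem_Icc] at hr hr'
    exact (ZMod.intCast_inj_of_natAbs_sub_lt (by omega)).1 (add_left_cancel h)

section CyclePowerArms

variable {V : Type*} {C : SimpleGraph V} {n k : ℕ} (φ : C ≃g cyclePower n k)

def cyclePowerArm (u : V) (i : ℕ) : V := φ.symm (φ u + (zigzag i : ZMod n))

variable {φ}

lemma cyclePowerArm_eq_iff {u x : V} {i : ℕ} :
    cyclePowerArm φ u i = x ↔ φ u + (zigzag i : ZMod n) = φ x :=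
  φ.toEquiv.symm_apply_eq

lemma sub_eq_of_cyclePowerArm_eq {u u' : V} {i i' : ℕ}
    (h : cyclePowerArm φ u i = cyclePowerArm φ u' i') :
    φ u - φ u' = ((zigzag i' - zigzag i : ℤ) : ZMod n) := by
  have h := congrArg φ h
  simp only [cyclePowerArm, RelIso.apply_symm_apply] at h
  push_cast
  linear_combination h

lemma cyclePowerArm_edge_eq {x y : V} {i : ℕ}
    (h : φ x - φ y = ((zigzag (i + 1) - zigzag i : ℤ) : ZMod n)) :
    s(cyclePowerArm φ (φ.symm (φ y - zigzag i)) (i + 1),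
      cyclePowerArm φ (φ.symm (φ y - zigzag i)) i) = s(x, y) := by
  rw [cyclePowerArm_eq_iff.2, cyclePowerArm_eq_iff.2] <;>
    simp only [RelIso.apply_symm_apply]
  · ring
  · push_cast at h
    linear_combination -h

variable (φ)

def cyclePowerArmDecomposition (hkn : 2 * k < n) : C.ArmDecomposition k where
  arm := cyclePowerArm φ
  arm_zero u := by simp [cyclePowerArm, zigzag_zero]
  adj_arm {u i} hi := by
    have hr := natAbs_zigzag_succ_sub i
    have hadj := cyclePower_adj_add_intCast (k := k) (by omega) (φ u + (zigzag i : ZMod n))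
      (r := zigzag (i + 1) - zigzag i) (by omega) (by omega)
    rw [← φ.map_adj_iff]
    simp only [cyclePowerArm, RelIso.apply_symm_apply]
    convert hadj using 1
    push_cast
    ring
  injOn_arm u i hi i' hi' h := by
    have hi : i ≤ k := hi
    have hi' : i' ≤ k := hi'
    have h := sub_eq_of_cyclePowerArm_eq h
    rw [sub_self, ← Int.cast_zero, eq_comm, ZMod.intCast_inj_of_natAbs_sub_lt] at h
    · exact zigzag_injective (by omega)
    · have := natAbs_zigzag_sub_le hi' hi
      omega
  eq_or_adj_of_arm_eq {u u' i i'} hi hi' h := by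
    have hsub := sub_eq_of_cyclePowerArm_eq h
    by_cases hr : zigzag i' - zigzag i = 0
    · left
      rw [hr, Int.cast_zero, sub_eq_zero] at hsub
      exact φ.injective hsub
    · right
      rw [← φ.map_adj_iff, ← sub_add_cancel (φ u) (φ u'), hsub, add_comm]
      exact cyclePower_adj_add_intCast (by omega) _ hr (natAbs_zigzag_sub_le hi' hi)
  exists_arm_edge_eq {x y} h := by
    obtain ⟨hne, r, hrk, hr⟩ := φ.map_adj_iff.2 h
    have hr0 : r ≠ 0 := by
      rintro rfl
      exact hne (sub_eq_zero.1 (by simpa using hr))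
    obtain ⟨i, hi⟩ := Nat.exists_eq_add_one.2 (Int.natAbs_pos.2 hr0)
    rcases Int.natAbs_eq_natAbs_iff.1 (hi.trans (natAbs_zigzag_succ_sub i).symm) with rfl | rfl
    · exact ⟨_, i, by omega, cyclePowerArm_edge_eq hr⟩
    · refine ⟨_, i, by omega, (cyclePowerArm_edge_eq (x := y) (y := x) ?_).trans Sym2.eq_swap⟩
      rw [← neg_sub, hr]
      push_cast
      ring
  eq_of_arm_edge_eq {u u' i i'} hi hi' h := by
    have hd := natAbs_zigzag_succ_sub i
    have hd' := natAbs_zigzag_succ_sub i'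
    rcases Sym2.eq_iff.1 h with ⟨h1, h2⟩ | ⟨h1, h2⟩
    · have e := (sub_eq_of_cyclePowerArm_eq h1).symm.trans (sub_eq_of_cyclePowerArm_eq h2)
      rw [ZMod.intCast_inj_of_natAbs_sub_lt] at e
      · obtain rfl : i = i' := by omega
        simpa [sub_eq_zero] using sub_eq_of_cyclePowerArm_eq h2
      · have := natAbs_zigzag_sub_le (m := k) (i := i' + 1) (i' := i + 1) hi' hi
        have := natAbs_zigzag_sub_le (m := k) (i := i') (i' := i) hi'.le hi.le
        omega
    · have e := (sub_eq_of_cyclePowerArm_eq h1).symm.trans (sub_eq_of_cyclePowerArm_eq h2)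
      rw [ZMod.intCast_inj_of_natAbs_sub_lt] at e
      · obtain rfl : i = i' := by omega
        omega
      · have := natAbs_zigzag_sub_le (m := k) (i := i') (i' := i + 1) hi'.le hi
        have := natAbs_zigzag_sub_le (m := k) (i := i' + 1) (i' := i) hi' hi.le
        omega

end CyclePowerArms

theorem stmt_3_general (n k : ℕ) (hn : 2 * k < n)
    (G C : SimpleGraph (ZMod n)) (hCG : C ≤ G)
    (hC : Nonempty (C ≃g cyclePower n k))
    (hreg : ∀ v : ZMod n, (G.neighborSet v).ncard = 2 * k + 1) :
    ∃ D : Set (Σ u : ZMod n, Σ v : ZMod n, G.Walk u v),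
      (∀ T ∈ D, T.2.2.IsPath ∧ T.2.2.length = 2 * k + 1 ∧
        ∃ e ∈ G.edgeSet \ C.edgeSet, T.2.2.edges[k]? = some e) ∧
      ∀ e ∈ G.edgeSet, ∃! T, T ∈ D ∧ e ∈ T.2.2.edges := by
  obtain ⟨φ⟩ := hC
  have hdegC v : (C.neighborSet v).ncard = 2 * k := by
    rw [← Set.ncard_image_of_injective _ φ.injective, φ.image_neighborSet,
      ncard_neighborSet_cyclePower hn]
  obtain ⟨f, hf⟩ := exists_sdiff_adj_iff_eq hCG fun v => by rw [hreg, hdegC]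
  exact (cyclePowerArmDecomposition φ hn).exists_centred_decomposition hCG f hf

/-- Let `k < n/2` be positive integers. If `G` is a simple `(2k+1)`-regular graph
on `n` vertices containing a spanning copy `C` of the `k`-th power of the cycle `C_n`, and
`M = E(G) \ E(C)`, then `G` admits an `M`-centered decomposition into paths with `2k+1` edges
(each path's middle edge, the one with index `k`, lies in `M`). -/
theorem stmt_3 (n k : ℕ) (hk : 0 < k) (hn : 2 * k < n)
    (G C : SimpleGraph (ZMod n)) (hCG : C ≤ G)
    (hC : Nonempty (C ≃g cyclePower n k))
    (hreg : ∀ v : ZMod n, (G.neighborSet v).ncard = 2 * k + 1) :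
    ∃ D : Set (Σ u : ZMod n, Σ v : ZMod n, G.Walk u v),
      (∀ T ∈ D, T.2.2.IsPath ∧ T.2.2.length = 2 * k + 1 ∧
        ∃ e ∈ G.edgeSet \ C.edgeSet, T.2.2.edges[k]? = some e) ∧
      ∀ e ∈ G.edgeSet, ∃! T, T ∈ D ∧ e ∈ T.2.2.edges :=
  stmt_3_general n k hn G C hCG hC hreg
end

section
/- If G is a 5-regular graph containing a K_{4,4}-factor K (a spanning subgraph whose components are all copies of K_{4,4}), and M = E(G) \ E(K), then G admits an M-centered P_5-decomposition. -/
open SimpleGraph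

/-!
Every vertex `v` has exactly one `G`-neighbour `m v` outside `K`, and `m` is a fixed-point-free
involution. It suffices to give every vertex `v` a path `v, x v, y v` in `K` such that these
2-paths ("cherries") partition `E(K)` and the cherries of `v` and `m v` are disjoint: the paths
`y v, x v, v, m v, x (m v), y (m v)`, one for each edge `v (m v)` of `M`, then decompose `E(G)`.
Inside a copy of `K_{4,4}` an `M`-edge joins two vertices of the same side, so the sides can be
labelled by `ℤ/4` in such a way that `M` only joins `i` to `i + 2`. Then the cherries
`(a, i), (b, i), (a, i + 1)` and `(b, i), (a, i - 1), (b, i + 1)` have the required properties.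
-/

theorem Function.Involutive.exists_forall_mem_iff_apply_notMem {α : Type*} {f : α → α}
    (hf : f.Involutive) (hne : ∀ a, f a ≠ a) : ∃ S : Set α, ∀ a, a ∈ S ↔ f a ∉ S := by
  let := IsWellOrder.linearOrder (WellOrderingRel (α := α))
  refine ⟨{a | a < f a}, fun a => ?_⟩
  change a < f a ↔ ¬f a < f (f a)
  rw [hf a, not_lt]
  exact ((hne a).symm.le_iff_lt).symm

set_option maxRecDepth 10000 in
theorem Fin.exists_perm_add_two (R : Fin 4 → Fin 4 → Prop) (hsymm : ∀ i j, R i j → R j i)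
    (hirrefl : ∀ i, ¬R i i) (hfun : ∀ i j k, R i j → R i k → j = k) :
    ∃ σ : Equiv.Perm (Fin 4), ∀ i j, R i j → σ j = σ i + 2 := by
  classical
  -- Encoded as partial functions, the matchings of `Fin 4` can be enumerated by `decide`.
  have key : ∀ q : Fin 4 → Option (Fin 4), (∀ i j, q i = some j → q j = some i ∧ i ≠ j) →
      ∃ σ : Equiv.Perm (Fin 4), ∀ i j, q i = some j → σ j = σ i + 2 := by
    decide
  let q i := if h : ∃ j, R i j then some h.choose else none
  have hq : ∀ i j, q i = some j ↔ R i j := by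
    intro i j
    by_cases h : ∃ j, R i j
    · simp only [q, dif_pos h, Option.some.injEq]
      exact ⟨fun hj => hj ▸ h.choose_spec, fun hj => hfun i _ _ h.choose_spec hj⟩
    · simp only [q, dif_neg h, reduceCtorEq, false_iff]
      exact fun hj => h ⟨j, hj⟩
  obtain ⟨σ, hσ⟩ := key q fun i j hij => by
    rw [hq] at hij ⊢
    exact ⟨hsymm _ _ hij, fun h => hirrefl i (h ▸ hij)⟩
  exact ⟨σ, fun i j hij => hσ i j ((hq i j).2 hij)⟩

namespace SimpleGraph

variable {V W C : Type*}

theorem nonempty_iso_bot_boxProd {K : SimpleGraph V} {H : SimpleGraph W}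
    (h : ∀ c : K.ConnectedComponent, Nonempty (K.induce c.supp ≃g H)) :
    Nonempty (K ≃g (⊥ : SimpleGraph K.ConnectedComponent) □ H) := by
  let ψ c := (h c).some
  let e : V ≃ K.ConnectedComponent × W :=
    (Equiv.sigmaFiberEquiv K.connectedComponentMk).symm.trans
      ((Equiv.sigmaCongrRight fun c => (ψ c).toEquiv).trans (Equiv.sigmaEquivProd _ _))
  have he : ∀ c v (hv : v ∈ c.supp), e v = (c, ψ c ⟨v, hv⟩) := by
    rintro _ v rfl
    rfl
  refine ⟨⟨e, fun {a b} => ?_⟩⟩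
  constructor
  · rintro (⟨hbot, -⟩ | ⟨hab, hc⟩)
    · exact hbot.elim
    · rw [he (e a).1 b hc.symm] at hab
      exact (ψ _).map_adj_iff.mp hab
  · intro hab
    have hb : b ∈ (K.connectedComponentMk a).supp :=
      (ConnectedComponent.connectedComponentMk_eq_of_adj hab).symm
    rw [he _ a rfl, he _ b hb]
    exact boxProd_adj_right.mpr ((ψ _).map_adj_iff.mpr hab)

theorem ncard_neighborSet_of_iso_bot_boxProd {K : SimpleGraph V} {H : SimpleGraph W}
    (e : K ≃g (⊥ : SimpleGraph C) □ H) (v : V) :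
    (K.neighborSet v).ncard = (H.neighborSet (e v).2).ncard := by
  rw [← Nat.card_coe_set_eq, Nat.card_congr (e.mapNeighborSet v), Nat.card_coe_set_eq,
    neighborSet_boxProd, neighborSet_bot, Set.empty_prod, Set.empty_union, Set.ncard_prod,
    Set.ncard_singleton, one_mul]

theorem exists_forall_sdiff_adj_iff {G K : SimpleGraph V} (hKG : K ≤ G)
    (h : ∀ v, (G.neighborSet v).ncard = (K.neighborSet v).ncard + 1) :
    ∃ m : V → V, ∀ v w, (G \ K).Adj v w ↔ w = m v := by
  suffices ∀ v, ∃ w, (G \ K).neighborSet v = {w} by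
    choose m hm using this
    exact ⟨m, fun v w => by rw [← mem_neighborSet, hm v, Set.mem_singleton_iff]⟩
  intro v
  have hsub := neighborSet_mono hKG v
  have hfin : (K.neighborSet v).Finite :=
    (Set.finite_of_ncard_ne_zero (by rw [h v]; omega)).subset hsub
  have hdiff : (G \ K).neighborSet v = G.neighborSet v \ K.neighborSet v := by
    ext w; simp
  rw [← Set.ncard_eq_one, hdiff, Set.ncard_sdiff hsub hfin, h v]
  omega

variable {H : SimpleGraph V} {m : V → V}

theorem involutive_of_forall_adj_iff (hm : ∀ v w, H.Adj v w ↔ w = m v) : m.Involutive :=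
  fun v => ((hm (m v) v).mp ((hm v (m v)).mpr rfl).symm).symm

theorem ne_of_forall_adj_iff (hm : ∀ v w, H.Adj v w ↔ w = m v) (v : V) : m v ≠ v :=
  (H.ne_of_adj ((hm v (m v)).mpr rfl)).symm

structure IsCherryDecomposition (K : SimpleGraph V) (x y : V → V) : Prop where
  adj_mid : ∀ v, K.Adj v (x v)
  adj_tip : ∀ v, K.Adj (x v) (y v)
  existsUnique : ∀ a b, K.Adj a b → ∃! v, s(a, b) = s(v, x v) ∨ s(a, b) = s(x v, y v)

namespace IsCherryDecomposition

theorem comap {K : SimpleGraph V} {K' : SimpleGraph W} (e : K ≃g K') {x y : W → W}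
    (h : K'.IsCherryDecomposition x y) :
    K.IsCherryDecomposition (e.symm ∘ x ∘ e) (e.symm ∘ y ∘ e) := by
  have hmap : ∀ a b c d, s(a, b) = s(c, d) ↔ s(e a, e b) = s(e c, e d) := fun a b c d => by
    rw [← Sym2.map_mk, ← Sym2.map_mk, (Sym2.map.injective e.injective).eq_iff]
  refine ⟨fun v => ?_, fun v => ?_, fun a b hab => ?_⟩
  · simpa [← e.map_adj_iff] using h.adj_mid (e v)
  · simpa [← e.map_adj_iff] using h.adj_tip (e v)
  · obtain ⟨r, hr, huniq⟩ := h.existsUnique _ _ (e.map_adj_iff.mpr hab)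
    refine ⟨e.symm r, ?_, fun v hv => e.eq_symm_apply.mpr (huniq _ ?_)⟩
    · simpa only [Function.comp_apply, hmap, e.apply_symm_apply] using hr
    · simpa only [Function.comp_apply, hmap, e.apply_symm_apply] using hv

theorem bot_boxProd {H : SimpleGraph W} {x y : W → W} (h : H.IsCherryDecomposition x y) :
    ((⊥ : SimpleGraph C) □ H).IsCherryDecomposition (Prod.map id x) (Prod.map id y) := by
  have hpair : ∀ (c d : C) (f g f' g' : W),
      s((c, f), (c, g)) = s((d, f'), (d, g')) ↔ c = d ∧ s(f, g) = s(f', g') := by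
    simp only [Sym2.eq_iff, Prod.mk.injEq]
    tauto
  refine ⟨fun p => boxProd_adj_right.mpr (h.adj_mid _),
    fun p => boxProd_adj_right.mpr (h.adj_tip _), ?_⟩
  rintro ⟨c, f⟩ ⟨d, g⟩ (⟨hbot, -⟩ | ⟨hfg, rfl : c = d⟩)
  · exact hbot.elim
  obtain ⟨r, hr, huniq⟩ := h.existsUnique f g hfg
  refine ⟨(c, r), by simpa [hpair] using hr, ?_⟩
  rintro ⟨d, r'⟩ hr'
  simp only [Prod.map_apply, id_eq, hpair] at hr'
  obtain rfl : c = d := hr'.elim And.left And.left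
  rw [huniq r' (hr'.imp And.right And.right)]

variable {G K : SimpleGraph V} {m x y : V → V}

def centeredWalk (h : K.IsCherryDecomposition x y) (hKG : K ≤ G) (hmG : ∀ v, G.Adj v (m v))
    (u : V) : G.Walk (y u) (y (m u)) :=
  .cons (hKG (h.adj_tip u)).symm <| .cons (hKG (h.adj_mid u)).symm <| .cons (hmG u) <|
    .cons (hKG (h.adj_mid (m u))) <| .cons (hKG (h.adj_tip (m u))) .nil

section

variable (h : K.IsCherryDecomposition x y) (hKG : K ≤ G) (hmG : ∀ v, G.Adj v (m v))

theorem mem_edges_centeredWalk {u : V} {e : Sym2 V} :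
    e ∈ (h.centeredWalk hKG hmG u).edges ↔ (e = s(u, x u) ∨ e = s(x u, y u)) ∨
      e = s(u, m u) ∨ (e = s(m u, x (m u)) ∨ e = s(x (m u), y (m u))) := by
  simp only [centeredWalk, Walk.edges_cons, Walk.edges_nil, List.mem_cons, List.not_mem_nil,
    or_false]
  rw [Sym2.eq_swap (a := y u), Sym2.eq_swap (a := x u) (b := u)]
  tauto

theorem exists_forall_mem_edges_centeredWalk_iff (hm : ∀ v w, (G \ K).Adj v w ↔ w = m v)
    {e : Sym2 V} (he : e ∈ G.edgeSet) :
    ∃ v, ∀ u, e ∈ (h.centeredWalk hKG hmG u).edges ↔ u = v ∨ u = m v := by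
  have hinv := involutive_of_forall_adj_iff hm
  induction e using Sym2.ind with | h a b => ?_
  by_cases hK : K.Adj a b
  · obtain ⟨v, hv, huniq⟩ := h.existsUnique a b hK
    have hcherry u : (s(a, b) = s(u, x u) ∨ s(a, b) = s(x u, y u)) ↔ u = v :=
      ⟨huniq u, fun hu => hu ▸ hv⟩
    have hmid u : s(a, b) ≠ s(u, m u) := fun hu =>
      ((sdiff_adj _ _ _ _).mp ((hm u (m u)).mpr rfl)).2 (by rwa [← mem_edgeSet, ← hu])
    refine ⟨v, fun u => ?_⟩
    rw [mem_edges_centeredWalk, hcherry, hcherry, hinv.eq_iff]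
    simp [hmid]
  · obtain rfl : b = m a := (hm a b).mp ⟨he, hK⟩
    have hcherry u : ¬(s(a, m a) = s(u, x u) ∨ s(a, m a) = s(x u, y u)) := by
      rintro (hu | hu) <;> refine hK ?_ <;> rw [← mem_edgeSet, hu]
      exacts [h.adj_mid u, h.adj_tip u]
    refine ⟨a, fun u => ?_⟩
    rw [mem_edges_centeredWalk, or_iff_right (hcherry u), or_iff_left (hcherry (m u))]
    constructor
    · rw [Sym2.eq_iff]
      rintro (⟨rfl, -⟩ | ⟨rfl, -⟩)
      exacts [Or.inl rfl, Or.inr (hinv u).symm]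
    · rintro (rfl | rfl)
      exacts [rfl, by rw [hinv, Sym2.eq_swap]]

end

theorem exists_centered_pathDecomposition (h : K.IsCherryDecomposition x y) (hKG : K ≤ G)
    (hm : ∀ v w, (G \ K).Adj v w ↔ w = m v)
    (hnodup : ∀ v, [y v, x v, v, m v, x (m v), y (m v)].Nodup) :
    ∃ D : Set (Σ u : V, Σ v : V, G.Walk u v),
      (∀ T ∈ D, T.2.2.IsPath ∧ T.2.2.length = 5 ∧
        ∃ e ∈ G.edgeSet \ K.edgeSet, T.2.2.edges[2]? = some e) ∧
      ∀ e ∈ G.edgeSet, ∃! T, T ∈ D ∧ e ∈ T.2.2.edges := by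
  have hmG v : G.Adj v (m v) := ((hm v (m v)).mpr rfl).1
  obtain ⟨S, hS⟩ := (involutive_of_forall_adj_iff hm).exists_forall_mem_iff_apply_notMem
    (ne_of_forall_adj_iff hm)
  let W := h.centeredWalk hKG hmG
  refine ⟨(fun u => ⟨_, _, W u⟩) '' S, ?_, fun e he => ?_⟩
  · rintro _ ⟨u, -, rfl⟩
    exact ⟨Walk.isPath_def _ |>.mpr (hnodup u), rfl, s(u, m u),
      (hm u (m u)).mpr rfl, rfl⟩
  obtain ⟨v, hvS, hv⟩ : ∃ v ∈ S, ∀ u, e ∈ (W u).edges ↔ u = v ∨ u = m v := by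
    obtain ⟨v, hv⟩ := h.exists_forall_mem_edges_centeredWalk_iff hKG hmG hm he
    by_cases hvS : v ∈ S
    · exact ⟨v, hvS, hv⟩
    · refine ⟨m v, not_not.mp (mt (hS v).mpr hvS), fun u => ?_⟩
      rw [hv, involutive_of_forall_adj_iff hm v, or_comm]
  refine ⟨⟨_, _, W v⟩, ⟨⟨v, hvS, rfl⟩, (hv v).mpr (Or.inl rfl)⟩, ?_⟩
  rintro _ ⟨⟨u, huS, rfl⟩, hu⟩
  rcases (hv u).mp hu with rfl | rfl
  · rfl
  · exact absurd huS ((hS v).mp hvS)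

end IsCherryDecomposition

theorem nodup_prodMap_cherries {x y o : W → W}
    (h : ∀ f, [y f, x f, f, o f, x (o f), y (o f)].Nodup) {p q : C × W}
    (hpq : q.1 = p.1 → q.2 = o p.2) :
    [Prod.map id y p, Prod.map id x p, p, q, Prod.map id x q, Prod.map id y q].Nodup := by
  obtain ⟨c, f⟩ := p
  obtain ⟨d, g⟩ := q
  by_cases hdc : d = c
  · subst hdc
    obtain rfl : g = o f := hpq rfl
    exact (h f).map (Prod.mk_right_injective d)
  · have hf := h f
    have hg := h g
    simp only [List.nodup_cons, List.mem_cons, List.not_mem_nil] at hf hg ⊢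
    simp only [Prod.map_apply, id_eq, Prod.ext_iff, true_and, Ne.symm hdc, false_and, or_self,
      or_false, not_or, not_false_eq_true, List.nodup_nil, and_self, and_true]
    tauto

end SimpleGraph

abbrev K44 : SimpleGraph (Fin 4 ⊕ Fin 4) := completeBipartiteGraph (Fin 4) (Fin 4)

namespace K44

variable {V C : Type*}

instance : DecidableRel K44.Adj := fun f g => by
  simp only [completeBipartiteGraph]; infer_instance

def mid : Fin 4 ⊕ Fin 4 → Fin 4 ⊕ Fin 4
  | .inl i => .inr i
  | .inr i => .inl (i - 1)

def tip : Fin 4 ⊕ Fin 4 → Fin 4 ⊕ Fin 4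
  | .inl i => .inl (i + 1)
  | .inr i => .inr (i + 1)

def opp : Fin 4 ⊕ Fin 4 → Fin 4 ⊕ Fin 4
  | .inl i => .inl (i + 2)
  | .inr i => .inr (i + 2)

theorem ncard_neighborSet (f : Fin 4 ⊕ Fin 4) : (K44.neighborSet f).ncard = 4 := by
  rw [Set.ncard_eq_toFinset_card']
  revert f
  decide

theorem isCherryDecomposition : K44.IsCherryDecomposition mid tip where
  adj_mid := by decide
  adj_tip := by decide
  existsUnique := by
    unfold ExistsUnique
    decide

theorem nodup_cherries_opp : ∀ f, [tip f, mid f, f, opp f, mid (opp f), tip (opp f)].Nodup := by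
  decide

theorem exists_iso_opp (R : Fin 4 ⊕ Fin 4 → Fin 4 ⊕ Fin 4 → Prop)
    (hsymm : ∀ f g, R f g → R g f) (hirrefl : ∀ f, ¬R f f) (hfun : ∀ f g h, R f g → R f h → g = h)
    (hR : ∀ f g, R f g → ¬K44.Adj f g) :
    ∃ π : K44 ≃g K44, ∀ f g, R f g → π g = opp (π f) := by
  obtain ⟨σ, hσ⟩ := Fin.exists_perm_add_two (fun i j => R (.inl i) (.inl j))
    (fun _ _ h => hsymm _ _ h) (fun _ => hirrefl _)
    (fun _ _ _ h h' => Sum.inl_injective (hfun _ _ _ h h'))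
  obtain ⟨τ, hτ⟩ := Fin.exists_perm_add_two (fun i j => R (.inr i) (.inr j))
    (fun _ _ h => hsymm _ _ h) (fun _ => hirrefl _)
    (fun _ _ _ h h' => Sum.inr_injective (hfun _ _ _ h h'))
  refine ⟨⟨Equiv.sumCongr σ τ, ?_⟩, ?_⟩
  · rintro (i | i) (j | j) <;> simp
  · rintro (i | i) (j | j) h
    · simp [opp, hσ i j h]
    · exact absurd (hR _ _ h) (by simp)
    · exact absurd (hR _ _ h) (by simp)
    · simp [opp, hτ i j h]

theorem exists_iso_bot_boxProd_opp {K : SimpleGraph V}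
    (e₀ : K ≃g (⊥ : SimpleGraph C) □ K44) {m : V → V} (hinv : m.Involutive)
    (hne : ∀ v, m v ≠ v) (hmK : ∀ v, ¬K.Adj v (m v)) :
    ∃ e : K ≃g (⊥ : SimpleGraph C) □ K44,
      ∀ v, (e (m v)).1 = (e v).1 → (e (m v)).2 = K44.opp (e v).2 := by
  have hrel c := K44.exists_iso_opp (fun f g => m (e₀.symm (c, f)) = e₀.symm (c, g))
    (fun f g h => by rw [← h, hinv])
    (fun f => hne _)
    (fun f g h hg hh => (Prod.ext_iff.mp (e₀.symm.injective (hg.symm.trans hh))).2)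
    (fun f g h hfg => hmK (e₀.symm (c, f)) <| by
      rw [h, ← e₀.map_adj_iff, e₀.apply_symm_apply, e₀.apply_symm_apply]
      exact boxProd_adj_right.mpr hfg)
  choose π hπ using hrel
  let shear : boxProd (⊥ : SimpleGraph C) K44 ≃g boxProd (⊥ : SimpleGraph C) K44 :=
    ⟨Equiv.prodShear (Equiv.refl C) fun c => (π c).toEquiv, fun {p q} => by
      obtain ⟨c, f⟩ := p
      obtain ⟨d, g⟩ := q
      simp only [boxProd_adj, bot_adj, false_and, false_or, Equiv.prodShear_apply,
        Equiv.refl_apply]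
      constructor
      · rintro ⟨h, rfl⟩
        exact ⟨(π c).map_adj_iff.mp h, rfl⟩
      · rintro ⟨h, rfl⟩
        exact ⟨(π c).map_adj_iff.mpr h, rfl⟩⟩
  refine ⟨e₀.trans shear, fun v hv => ?_⟩
  simp only [shear, RelIso.trans_apply, RelIso.coe_fn_mk, Equiv.prodShear_apply,
    Equiv.refl_apply] at hv ⊢
  have hv' : e₀.symm ((e₀ v).1, (e₀ (m v)).2) = m v := by
    rw [← hv]
    exact e₀.symm_apply_apply _
  rw [hv]
  exact hπ _ _ _ (by rw [hv', Prod.mk.eta, e₀.symm_apply_apply])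

end K44

theorem stmt_9_general {V : Type*}
    (G K : SimpleGraph V) (hKG : K ≤ G)
    (hfactor : ∀ c : K.ConnectedComponent,
      Nonempty ((K.induce c.supp) ≃g completeBipartiteGraph (Fin 4) (Fin 4)))
    (hreg : ∀ v : V, (G.neighborSet v).ncard = 5) :
    ∃ D : Set (Σ u : V, Σ v : V, G.Walk u v),
      (∀ T ∈ D, T.2.2.IsPath ∧ T.2.2.length = 5 ∧
        ∃ e ∈ G.edgeSet \ K.edgeSet, T.2.2.edges[2]? = some e) ∧
      ∀ e ∈ G.edgeSet, ∃! T, T ∈ D ∧ e ∈ T.2.2.edges := by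
  obtain ⟨e₀⟩ := nonempty_iso_bot_boxProd hfactor
  obtain ⟨m, hm⟩ := exists_forall_sdiff_adj_iff hKG fun v => by
    rw [hreg, ncard_neighborSet_of_iso_bot_boxProd e₀, K44.ncard_neighborSet]
  obtain ⟨e, he⟩ := K44.exists_iso_bot_boxProd_opp e₀ (involutive_of_forall_adj_iff hm)
    (ne_of_forall_adj_iff hm) fun v => ((sdiff_adj _ _ _ _).mp ((hm v (m v)).mpr rfl)).2
  refine (K44.isCherryDecomposition.bot_boxProd.comap e).exists_centered_pathDecomposition
    hKG hm fun v => ?_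
  simpa using (nodup_prodMap_cherries K44.nodup_cherries_opp (he v)).map e.symm.injective

/-- If `G` is a 5-regular graph containing a `K_{4,4}`-factor `K` (a spanning
subgraph each of whose connected components is isomorphic to `K_{4,4}`), and
`M = E(G) \ E(K)`, then `G` admits an `M`-centered `P_5`-decomposition. -/
theorem stmt_9 {V : Type*} [Fintype V]
    (G K : SimpleGraph V) (hKG : K ≤ G)
    (hfactor : ∀ c : K.ConnectedComponent,
      Nonempty ((K.induce c.supp) ≃g completeBipartiteGraph (Fin 4) (Fin 4)))
    (hreg : ∀ v : V, (G.neighborSet v).ncard = 5) :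
    ∃ D : Set (Σ u : V, Σ v : V, G.Walk u v),
      (∀ T ∈ D, T.2.2.IsPath ∧ T.2.2.length = 5 ∧
        ∃ e ∈ G.edgeSet \ K.edgeSet, T.2.2.edges[2]? = some e) ∧
      ∀ e ∈ G.edgeSet, ∃! T, T ∈ D ∧ e ∈ T.2.2.edges :=
  stmt_9_general G K hKG hfactor hreg
end

section
/- Let Γ be a finite group and g, r ∈ Γ with 0 ∉ {g, r, 2g, 2r}, g ∉ {r, -r}, g + r = r + g, 2g + 2r = 0, and 2g - 2r = 0. Then every connected component of the Cayley graph X(Γ, {g, -g, r, -r}) is isomorphic to K_{4,4}. -/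
open SimpleGraph

/-- The Cayley graph `X(Γ, S)` of an (additively written, not necessarily abelian) group `Γ`
with connection set `S`: vertices are the elements of `Γ`, and `x ~ y` iff `y - x ∈ S`
(for `S` closed under inverses this is symmetric; we state it symmetrically). -/
def cayleyGraph {Γ : Type*} [AddGroup Γ] (S : Set Γ) : SimpleGraph Γ where
  Adj x y := x ≠ y ∧ (y - x ∈ S ∨ x - y ∈ S)
  symm := ⟨by rintro x y ⟨h, h'⟩; exact ⟨h.symm, h'.symm⟩⟩
  loopless := ⟨by rintro x ⟨h, -⟩; exact h rfl⟩

/-! Since `g` and `r` commute, `4 • g = 0` and `2 • g = 2 • r`, the elements `g` and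
`b = r - g` span a copy of `ZMod 4 × ZMod 2` in `Γ` (`g` has order 4, `b` has order 2 and
`b ∉ ⟨g⟩`), in which `{g, -g, r, -r}` is the set of elements with odd first coordinate.
So each component of the Cayley graph is a right coset of this subgroup of order 8, on which two
vertices are adjacent iff their first coordinates have different parity: a copy of `K₄,₄`. -/

open Function

theorem SimpleGraph.completeBipartiteGraph_connected {α β : Type*} [Nonempty α] [Nonempty β] :
    (completeBipartiteGraph α β).Connected := by
  obtain ⟨a⟩ := ‹Nonempty α›
  obtain ⟨b⟩ := ‹Nonempty β›
  have hb : (completeBipartiteGraph α β).Reachable (.inl a) (.inr b) := Adj.reachable (by simp)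
  refine (connected_iff_exists_forall_reachable _).mpr ⟨.inl a, ?_⟩
  rintro (a' | b')
  · exact hb.trans (Adj.reachable (by simp))
  · exact Adj.reachable (by simp)

namespace SimpleGraph.ConnectedComponent

variable {V W : Type*} {G : SimpleGraph V} {H : SimpleGraph W}

theorem supp_eq_range_of_embedding (f : H ↪g G) (hH : H.Connected)
    (hf : ∀ w v, G.Adj (f w) v → v ∈ Set.range f) (w : W) :
    (G.connectedComponentMk (f w)).supp = Set.range f := by
  have closed : ∀ {u v} (p : G.Walk u v), u ∈ Set.range f → v ∈ Set.range f := by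
    intro u v p
    induction p with
    | nil => exact id
    | cons h _ ih => rintro ⟨w, rfl⟩; exact ih (hf w _ h)
  ext v
  constructor
  · intro hv
    obtain ⟨p⟩ := ConnectedComponent.exact hv
    exact closed p.reverse ⟨w, rfl⟩
  · rintro ⟨w', rfl⟩
    exact ConnectedComponent.sound ((hH w' w).map f.toHom)

theorem nonempty_induce_supp_iso_of_embedding (f : H ↪g G) (hH : H.Connected)
    (hf : ∀ w v, G.Adj (f w) v → v ∈ Set.range f) (w : W) :
    Nonempty (G.induce (G.connectedComponentMk (f w)).supp ≃g H) := by
  rw [supp_eq_range_of_embedding f hH hf w]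
  exact ⟨f.isoInduceRange.symm⟩

end SimpleGraph.ConnectedComponent

section CayleyGraph

variable {Γ A : Type*} [AddGroup Γ] [AddGroup A] (ψ : A →+ Γ) (T : Set A)

@[simps]
def cayleyGraphEmbedding (hψ : Injective ψ) (v : Γ) :
    cayleyGraph T ↪g cayleyGraph (ψ '' T) where
  toFun a := ψ a + v
  inj' := (add_left_injective v).comp hψ
  map_rel_iff' := by simp [cayleyGraph, ← map_sub, hψ.eq_iff]

theorem mem_range_cayleyGraphEmbedding_of_adj (hψ : Injective ψ) (v : Γ) (a : A) (y : Γ)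
    (h : (cayleyGraph (ψ '' T)).Adj (ψ a + v) y) :
    y ∈ Set.range (cayleyGraphEmbedding ψ T hψ v) := by
  obtain ⟨-, ⟨t, -, ht⟩ | ⟨t, -, ht⟩⟩ := h
  · exact ⟨t + a, by simp [ht, add_assoc]⟩
  · exact ⟨-t + a, by simp [ht, add_assoc]⟩

theorem nonempty_cayleyGraph_induce_supp_iso (hψ : Injective ψ)
    (hT : (cayleyGraph T).Connected) (c : (cayleyGraph (ψ '' T)).ConnectedComponent) :
    Nonempty ((cayleyGraph (ψ '' T)).induce c.supp ≃g cayleyGraph T) := by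
  obtain ⟨v, rfl⟩ := c.exists_rep
  have hv : cayleyGraphEmbedding ψ T hψ v 0 = v := by simp
  have := ConnectedComponent.nonempty_induce_supp_iso_of_embedding
    (cayleyGraphEmbedding ψ T hψ v) hT (mem_range_cayleyGraphEmbedding_of_adj ψ T hψ v) 0
  rwa [hv] at this

end CayleyGraph

theorem nonempty_cayleyGraph_zmod4_prod_zmod2_iso :
    Nonempty (cayleyGraph ({(1, 0), -(1, 0), (1, 1), -(1, 1)} : Set (ZMod 4 × ZMod 2)) ≃g
      completeBipartiteGraph (Fin 4) (Fin 4)) := by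
  let f : Fin 4 ⊕ Fin 4 → ZMod 4 × ZMod 2 :=
    Sum.elim ![(0, 0), (2, 0), (0, 1), (2, 1)] ![(1, 0), (3, 0), (1, 1), (3, 1)]
  have hf : Bijective f := by decide
  -- The connection set consists of the elements with odd first coordinate, and `f` sends the
  -- two parts of `K₄,₄` to the elements with even and with odd first coordinate.
  have hadj : ∀ a b,
      (cayleyGraph ({(1, 0), -(1, 0), (1, 1), -(1, 1)} : Set (ZMod 4 × ZMod 2))).Adj
        (f a) (f b) ↔ (completeBipartiteGraph (Fin 4) (Fin 4)).Adj a b := by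
    simp only [cayleyGraph, completeBipartiteGraph, Set.mem_insert_iff, Set.mem_singleton_iff]
    decide
  exact ⟨Iso.symm ⟨Equiv.ofBijective f hf, hadj _ _⟩⟩

theorem ZMod.lift_eq_val_nsmul {A : Type*} [AddGroup A] {m : ℕ} [NeZero m]
    (f : {f : ℤ →+ A // f m = 0}) (x : ZMod m) : ZMod.lift m f x = x.val • f.1 1 :=
  calc ZMod.lift m f x = ZMod.lift m f ((x.val : ℤ) : ZMod m) := by
        rw [Int.cast_natCast, ZMod.natCast_zmod_val]
    _ = x.val • f.1 1 := by rw [ZMod.lift_coe, ← map_nsmul, nsmul_one]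

section ZModProdLift

variable {A : Type*} [AddCommGroup A]

def zmodProdLift {m n : ℕ} (g b : A) (hg : m • g = 0) (hb : n • b = 0) :
    ZMod m × ZMod n →+ A :=
  (ZMod.lift m ⟨zmultiplesHom A g, by simpa using hg⟩).coprod
    (ZMod.lift n ⟨zmultiplesHom A b, by simpa using hb⟩)

theorem zmodProdLift_apply {m n : ℕ} [NeZero m] [NeZero n] {g b : A} (hg : m • g = 0)
    (hb : n • b = 0) (p : ZMod m × ZMod n) :
    zmodProdLift g b hg hb p = p.1.val • g + p.2.val • b := by
  simp [zmodProdLift, ZMod.lift_eq_val_nsmul]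

theorem zmodProdLift_injective {g b : A} (hg : 4 • g = 0) (hb : 2 • b = 0)
    (hg2 : 2 • g ≠ 0) (hb0 : b ≠ 0) (hbg : b ≠ 2 • g) :
    Injective (zmodProdLift g b hg hb) := by
  rw [injective_iff_map_eq_zero]
  rintro ⟨x, y⟩ h
  rw [zmodProdLift_apply] at h
  fin_cases x <;> fin_cases y <;> simp only [ZMod.val] at h
  all_goals simp only [zero_smul, one_smul, zero_add, add_zero] at h
  · rfl
  · exact absurd h hb0
  · exact absurd (by simp [h]) hg2
  · exact absurd (by linear_combination (norm := module) 2 • h - hb) hg2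
  · exact absurd h hg2
  · exact absurd (by linear_combination (norm := module) h - hg) hbg
  · exact absurd (by linear_combination (norm := module) 2 • h - hg) hg2
  · exact absurd (by linear_combination (norm := module) 2 • h - hb - hg) hg2

theorem exists_zmod4_prod_zmod2_embedding_of_comm {g r : A} (h4 : 4 • g = 0)
    (h2 : 2 • g = 2 • r) (h2g : 2 • g ≠ 0) (hgr : g ≠ r) (hgnr : g ≠ -r) :
    ∃ ψ : ZMod 4 × ZMod 2 →+ A, Injective ψ ∧ ψ (1, 0) = g ∧ ψ (1, 1) = r := by
  have hb : 2 • (r - g) = 0 := by rw [smul_sub, h2, sub_self]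
  have hb2g : r - g ≠ 2 • g := fun h => hgnr (by linear_combination (norm := module) h + h4)
  refine ⟨zmodProdLift g (r - g) h4 hb,
    zmodProdLift_injective h4 hb h2g (sub_ne_zero.mpr hgr.symm) hb2g, ?_, ?_⟩ <;>
  simp [zmodProdLift_apply, ZMod.val_one'']

end ZModProdLift

open scoped IsMulCommutative in
theorem exists_zmod4_prod_zmod2_embedding {Γ : Type*} [AddGroup Γ] {g r : Γ}
    (hcomm : AddCommute g r) (h4 : 4 • g = 0) (h2 : 2 • g = 2 • r) (h2g : 2 • g ≠ 0)
    (hgr : g ≠ r) (hgnr : g ≠ -r) :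
    ∃ ψ : ZMod 4 × ZMod 2 →+ Γ, Injective ψ ∧ ψ (1, 0) = g ∧ ψ (1, 1) = r := by
  set H := AddSubgroup.closure ({g, r} : Set Γ)
  have : IsAddCommutative H := AddSubgroup.isAddCommutative_closure <| by
    simp only [Set.mem_insert_iff, Set.mem_singleton_iff]
    rintro x (rfl | rfl) y (rfl | rfl) <;> first | rfl | exact hcomm | exact hcomm.symm
  have hg : g ∈ H := AddSubgroup.subset_closure (by simp)
  have hr : r ∈ H := AddSubgroup.subset_closure (by simp)
  obtain ⟨ψ, hψ, hψg, hψr⟩ :=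
    exists_zmod4_prod_zmod2_embedding_of_comm (g := (⟨g, hg⟩ : H)) (r := ⟨r, hr⟩)
      (Subtype.ext (by simpa using h4)) (Subtype.ext (by simpa using h2))
      (fun h => h2g (by simpa using congrArg Subtype.val h))
      (fun h => hgr (congrArg Subtype.val h)) (fun h => hgnr (congrArg Subtype.val h))
  exact ⟨H.subtype.comp ψ, Subtype.val_injective.comp hψ, congrArg Subtype.val hψg,
    congrArg Subtype.val hψr⟩

theorem stmt_10_general {Γ : Type*} [AddGroup Γ] (g r : Γ)
    (h2g0 : g + g ≠ 0) (hgr : g ≠ r) (hgnr : g ≠ -r) (hcomm : g + r = r + g)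
    (h1 : g + g + (r + r) = 0) (h2 : g + g - (r + r) = 0) :
    ∀ c : (cayleyGraph ({g, -g, r, -r} : Set Γ)).ConnectedComponent,
      Nonempty (((cayleyGraph ({g, -g, r, -r} : Set Γ)).induce c.supp) ≃g
        completeBipartiteGraph (Fin 4) (Fin 4)) := by
  have h2gr : 2 • g = 2 • r := by simpa [two_nsmul, sub_eq_zero] using h2
  have h4g : 4 • g = 0 := by
    rw [show 4 = 2 + 2 from rfl, add_nsmul]
    nth_rewrite 2 [h2gr]
    simpa [two_nsmul] using h1
  obtain ⟨ψ, hψ, hψg, hψr⟩ :=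
    exists_zmod4_prod_zmod2_embedding hcomm h4g h2gr (by rwa [two_nsmul]) hgr hgnr
  have hS : ψ '' {(1, 0), -(1, 0), (1, 1), -(1, 1)} = {g, -g, r, -r} := by
    simp only [Set.image_insert_eq, Set.image_singleton, map_neg, hψg, hψr]
  obtain ⟨e⟩ := nonempty_cayleyGraph_zmod4_prod_zmod2_iso
  rw [← hS]
  intro c
  obtain ⟨e'⟩ := nonempty_cayleyGraph_induce_supp_iso ψ _ hψ
    (e.connected_iff.mpr completeBipartiteGraph_connected) c
  exact ⟨e'.trans e⟩

/-- Let `Γ` be a finite group and `g, r ∈ Γ` with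
`0 ∉ {g, r, 2g, 2r}`, `g ∉ {r, -r}`, `g + r = r + g`, `2g + 2r = 0` and `2g - 2r = 0`.
Then every connected component of the Cayley graph `X(Γ, {g, -g, r, -r})` is isomorphic
to `K_{4,4}`. -/
theorem stmt_10 {Γ : Type*} [AddGroup Γ] [Fintype Γ] (g r : Γ)
    (hg0 : g ≠ 0) (hr0 : r ≠ 0) (h2g0 : g + g ≠ 0) (h2r0 : r + r ≠ 0)
    (hgr : g ≠ r) (hgnr : g ≠ -r) (hcomm : g + r = r + g)
    (h1 : g + g + (r + r) = 0) (h2 : g + g - (r + r) = 0) :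
    ∀ c : (cayleyGraph ({g, -g, r, -r} : Set Γ)).ConnectedComponent,
      Nonempty (((cayleyGraph ({g, -g, r, -r} : Set Γ)).induce c.supp) ≃g
        completeBipartiteGraph (Fin 4) (Fin 4)) :=
  stmt_10_general g r h2g0 hgr hgnr hcomm h1 h2
end

section
/- If a (2k+1)-regular graph G contains a perfect matching, then for every k' ≤ k, G contains a spanning 2k'-regular subgraph. -/
/-!
Deleting the perfect matching leaves a `2k`-regular graph. Hall's theorem, applied to the
edges against `V × Fin k` (a set `S` of edges touches at least `|S| / k` vertices, because each
vertex lies on `2k` edges), makes every vertex the tail of exactly `k` edges: an orientation with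
all in- and out-degrees `k`. Such an orientation is a `k`-regular bipartite graph between two
copies of `V`, so Hall's theorem gives a permutation `σ` with all arcs `v → σ v` present; removing
them lowers every in- and out-degree by one. After `k - k'` steps, forgetting the directions
leaves a `2k'`-regular subgraph.
-/

open Finset SimpleGraph Function

theorem Fintype.exists_injective_of_le_card_of_card_le {ι α : Type*} [Fintype ι] [Fintype α]
    (r : ι → α → Prop) [DecidableRel r] {m : ℕ} (hm : 0 < m)
    (hι : ∀ i, m ≤ #{a | r i a}) (hα : ∀ a, #{i | r i a} ≤ m) :
    ∃ f : ι → α, Injective f ∧ ∀ i, r i (f i) := by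
  refine (Fintype.all_card_le_filter_rel_iff_exists_injective r).1 fun s => ?_
  have : #s * m ≤ #{a | ∃ i ∈ s, r i a} * m := by
    refine card_mul_le_card_mul r (fun i hi => (hι i).trans (card_le_card fun a ha => ?_))
      (fun a _ => (card_le_card (monotone_filter_left _ (subset_univ s))).trans (hα a))
    simp only [bipartiteAbove, mem_filter, mem_univ, true_and] at ha ⊢
    exact ⟨⟨i, hi, ha⟩, ha⟩
  exact Nat.le_of_mul_le_mul_right this hm

section Arcs

variable {V : Type*} [Fintype V] [DecidableEq V]

-- A finset `A` of pairs is read as the arc set of a digraph on `V`.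
def outNbrs (A : Finset (V × V)) (v : V) : Finset V := {u | (v, u) ∈ A}

def inNbrs (A : Finset (V × V)) (v : V) : Finset V := {u | (u, v) ∈ A}

@[simp] lemma mem_outNbrs {A : Finset (V × V)} {v u : V} : u ∈ outNbrs A v ↔ (v, u) ∈ A := by
  simp [outNbrs]

@[simp] lemma mem_inNbrs {A : Finset (V × V)} {v u : V} : u ∈ inNbrs A v ↔ (u, v) ∈ A := by
  simp [inNbrs]

def IsDiregularOfDegree (A : Finset (V × V)) (k : ℕ) : Prop :=
  ∀ v, #(outNbrs A v) = k ∧ #(inNbrs A v) = k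

namespace IsDiregularOfDegree

variable {A : Finset (V × V)} {k : ℕ}

lemma exists_perm (hA : IsDiregularOfDegree A (k + 1)) :
    ∃ σ : Equiv.Perm V, ∀ v, (v, σ v) ∈ A := by
  obtain ⟨f, hf, hfA⟩ := Fintype.exists_injective_of_le_card_of_card_le
    (fun v u => (v, u) ∈ A) k.succ_pos (fun v => (hA v).1.ge) (fun u => (hA u).2.le)
  exact ⟨Equiv.ofBijective f (Finite.injective_iff_bijective.1 hf), hfA⟩

lemma exists_subset_of_succ (hA : IsDiregularOfDegree A (k + 1)) :
    ∃ B ⊆ A, IsDiregularOfDegree B k := by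
  obtain ⟨σ, hσ⟩ := hA.exists_perm
  refine ⟨A.filter fun p => σ p.1 ≠ p.2, filter_subset _ _, fun v => ⟨?_, ?_⟩⟩
  · have : outNbrs (A.filter fun p => σ p.1 ≠ p.2) v = (outNbrs A v).erase (σ v) := by
      ext u; simp [and_comm, eq_comm]
    rw [this, card_erase_of_mem (mem_outNbrs.2 (hσ v)), (hA v).1, Nat.add_sub_cancel]
  · have : inNbrs (A.filter fun p => σ p.1 ≠ p.2) v = (inNbrs A v).erase (σ.symm v) := by
      ext u; simp [and_comm, Equiv.eq_symm_apply]
    rw [this, card_erase_of_mem (mem_inNbrs.2 (by simpa using hσ (σ.symm v))), (hA v).2,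
      Nat.add_sub_cancel]

lemma exists_subset_of_le (hA : IsDiregularOfDegree A k) {j : ℕ} (hj : j ≤ k) :
    ∃ B ⊆ A, IsDiregularOfDegree B j := by
  induction k generalizing A with
  | zero => exact ⟨A, subset_rfl, Nat.le_zero.1 hj ▸ hA⟩
  | succ k ih =>
    rcases hj.eq_or_lt with rfl | hj
    · exact ⟨A, subset_rfl, hA⟩
    obtain ⟨B, hBA, hB⟩ := hA.exists_subset_of_succ
    obtain ⟨C, hCB, hC⟩ := ih hB (Nat.le_of_lt_succ hj)
    exact ⟨C, hCB.trans hBA, hC⟩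

end IsDiregularOfDegree

end Arcs

namespace SimpleGraph

variable {V : Type*}

lemma ncard_neighborSet_eq_degree (G : SimpleGraph V) (v : V) [Fintype (G.neighborSet v)] :
    (G.neighborSet v).ncard = G.degree v := by
  rw [Set.ncard_eq_toFinset_card']
  rfl

lemma ncard_neighborSet_sdiff_spanningCoe [Finite V] {G : SimpleGraph V} {M : G.Subgraph}
    (hM : M.IsPerfectMatching) (v : V) :
    ((G \ M.spanningCoe).neighborSet v).ncard = (G.neighborSet v).ncard - 1 := by
  obtain ⟨w, hvw, hw⟩ := Subgraph.isPerfectMatching_iff.1 hM v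
  have hM_nbr : M.spanningCoe.neighborSet v = {w} := by
    ext u
    exact ⟨hw u, fun hu => hu ▸ hvw⟩
  rw [neighborSet_sdiff, hM_nbr]
  exact Set.ncard_sdiff_singleton_of_mem hvw.adj_sub

structure IsOrientation (A : Finset (V × V)) (G : SimpleGraph V) : Prop where
  adj_iff : ∀ x y, G.Adj x y ↔ (x, y) ∈ A ∨ (y, x) ∈ A
  asymm : ∀ ⦃x y⦄, (x, y) ∈ A → (y, x) ∉ A

lemma isOrientation_fromRel {A : Finset (V × V)} (hA : ∀ ⦃x y⦄, (x, y) ∈ A → (y, x) ∉ A) :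
    IsOrientation A (fromRel fun x y => (x, y) ∈ A) where
  adj_iff x y := by
    rw [fromRel_adj, and_iff_right_iff_imp]
    rintro (h | h) rfl <;> exact hA h h
  asymm := hA

lemma IsOrientation.fromRel_le {A B : Finset (V × V)} {G : SimpleGraph V}
    (hA : IsOrientation A G) (hBA : B ⊆ A) : fromRel (fun x y => (x, y) ∈ B) ≤ G := by
  rintro x y ⟨-, hxy | hyx⟩
  · exact (hA.adj_iff x y).2 (.inl (hBA hxy))
  · exact (hA.adj_iff x y).2 (.inr (hBA hyx))

variable [Fintype V] [DecidableEq V] {G : SimpleGraph V} [DecidableRel G.Adj] {k : ℕ}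

lemma IsOrientation.card_outNbrs_add_card_inNbrs {A : Finset (V × V)} (hA : IsOrientation A G)
    (v : V) : #(outNbrs A v) + #(inNbrs A v) = G.degree v := by
  have hdisj : Disjoint (outNbrs A v) (inNbrs A v) :=
    Finset.disjoint_left.2 fun _ hout hin => hA.asymm (mem_outNbrs.1 hout) (mem_inNbrs.1 hin)
  rw [← card_union_of_disjoint hdisj, ← card_neighborFinset_eq_degree]
  congr 1
  ext u
  simp [hA.adj_iff]

lemma exists_isOrientation_of_tail (τ : G.edgeSet → V)
    (hτ : ∀ e : G.edgeSet, τ e ∈ (e : Sym2 V)) :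
    ∃ A : Finset (V × V), IsOrientation A G ∧ ∀ v, #(outNbrs A v) = #{e | τ e = v} := by
  classical
  let A : Finset (V × V) := {p | ∃ e : G.edgeSet, (e : Sym2 V) = s(p.1, p.2) ∧ τ e = p.1}
  have hA : ∀ x y, (x, y) ∈ A ↔ ∃ e : G.edgeSet, (e : Sym2 V) = s(x, y) ∧ τ e = x := by
    simp [A]
  have hadj : ∀ {x y}, (x, y) ∈ A → G.Adj x y := by
    intro x y hxy
    obtain ⟨e, he, -⟩ := (hA x y).1 hxy
    exact G.mem_edgeSet.1 (he ▸ e.2)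
  refine ⟨A, ⟨fun x y => ⟨fun h => ?_, ?_⟩, fun x y hxy hyx => ?_⟩, fun v => ?_⟩
  · rcases Sym2.mem_iff.1 (hτ ⟨s(x, y), h⟩) with hx | hy
    · exact .inl ((hA x y).2 ⟨_, rfl, hx⟩)
    · exact .inr ((hA y x).2 ⟨_, Sym2.eq_swap, hy⟩)
  · rintro (h | h)
    · exact hadj h
    · exact (hadj h).symm
  · obtain ⟨e₁, he₁, hτ₁⟩ := (hA x y).1 hxy
    obtain ⟨e₂, he₂, hτ₂⟩ := (hA y x).1 hyx
    have : e₁ = e₂ := Subtype.ext (he₁.trans (he₂.trans Sym2.eq_swap).symm)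
    exact G.ne_of_adj (hadj hxy) (hτ₁.symm.trans (this ▸ hτ₂))
  · refine card_bij (fun u hu => ⟨s(v, u), hadj (mem_outNbrs.1 hu)⟩) (fun u hu => ?_)
      (fun u₁ _ u₂ _ h => Sym2.congr_right.1 (congrArg Subtype.val h)) (fun e he => ?_)
    · obtain ⟨e, he, hτe⟩ := (hA v u).1 (mem_outNbrs.1 hu)
      have : e = ⟨s(v, u), hadj (mem_outNbrs.1 hu)⟩ := Subtype.ext he
      simpa [← this] using hτe
    · have hv : v ∈ (e : Sym2 V) := (mem_filter.1 he).2 ▸ hτ e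
      obtain ⟨u, hu⟩ := Sym2.mem_iff_exists.1 hv
      exact ⟨u, mem_outNbrs.2 ((hA v u).2 ⟨e, hu, by simpa using he⟩), Subtype.ext hu.symm⟩

lemma IsRegularOfDegree.exists_tail (hG : G.IsRegularOfDegree (2 * k)) (hk : 0 < k) :
    ∃ τ : G.edgeSet → V, (∀ e : G.edgeSet, τ e ∈ (e : Sym2 V)) ∧ ∀ v, #{e | τ e = v} = k := by
  have h_edge (e : G.edgeSet) : 2 * k ≤ #{p : V × Fin k | p.1 ∈ (e : Sym2 V)} := by
    obtain ⟨e, he⟩ := e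
    induction e using Sym2.ind with | h x y => ?_
    have : ({p | p.1 ∈ s(x, y)} : Finset (V × Fin k)) = {x, y} ×ˢ univ := by
      ext p; simp
    rw [this, card_product, card_pair (G.ne_of_adj he), card_univ, Fintype.card_fin]
  have h_vertex (p : V × Fin k) : #{e : G.edgeSet | p.1 ∈ (e : Sym2 V)} ≤ 2 * k :=
    calc #{e : G.edgeSet | p.1 ∈ (e : Sym2 V)}
        ≤ #(G.incidenceFinset p.1) :=
          card_le_card_of_injOn Subtype.val (fun e he => by
            simpa [mem_incidenceFinset] using ⟨e.2, (mem_filter.1 he).2⟩)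
            Subtype.val_injective.injOn
      _ = 2 * k := by rw [card_incidenceFinset_eq_degree, hG.degree_eq]
  obtain ⟨f, hf, hfe⟩ :=
    Fintype.exists_injective_of_le_card_of_card_le _ (by positivity) h_edge h_vertex
  have hcard : Fintype.card G.edgeSet = Fintype.card (V × Fin k) := by
    have := G.sum_degrees_eq_twice_card_edges
    simp only [hG.degree_eq, sum_const, card_univ, smul_eq_mul, edgeFinset_card] at this
    simp only [Fintype.card_prod, Fintype.card_fin]
    linarith
  have hbij : Bijective f := (Fintype.bijective_iff_injective_and_card f).2 ⟨hf, hcard⟩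
  refine ⟨fun e => (f e).1, hfe, fun v => ?_⟩
  calc #{e | (f e).1 = v} = #({p | p.1 = v} : Finset (V × Fin k)) :=
        card_nbij f (fun e he => by simpa using he) hf.injOn
          (fun p hp => by obtain ⟨e, rfl⟩ := hbij.2 p; exact ⟨e, by simpa using hp, rfl⟩)
    _ = k := by
        rw [show ({p | p.1 = v} : Finset (V × Fin k)) = {v} ×ˢ univ by
          ext ⟨a, i⟩; simp [eq_comm]]
        simp

lemma IsRegularOfDegree.exists_isOrientation_isDiregularOfDegree
    (hG : G.IsRegularOfDegree (2 * k)) (hk : 0 < k) :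
    ∃ A : Finset (V × V), IsOrientation A G ∧ IsDiregularOfDegree A k := by
  obtain ⟨τ, hτ, hτk⟩ := hG.exists_tail hk
  obtain ⟨A, hA, hout⟩ := exists_isOrientation_of_tail τ hτ
  refine ⟨A, hA, fun v => ⟨(hout v).trans (hτk v), ?_⟩⟩
  have := hA.card_outNbrs_add_card_inNbrs v
  rw [hout, hτk, hG.degree_eq] at this
  omega

end SimpleGraph

/-- If a `(2k+1)`-regular graph `G` contains a perfect matching, then for every
`k' ≤ k`, `G` contains a spanning `2k'`-regular subgraph. -/
theorem stmt_17 {V : Type*} [Fintype V] (k : ℕ)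
    (G : SimpleGraph V) (hreg : ∀ v : V, (G.neighborSet v).ncard = 2 * k + 1)
    (M : G.Subgraph) (hM : M.IsPerfectMatching) :
    ∀ k' ≤ k, ∃ H : SimpleGraph V, H ≤ G ∧ ∀ v : V, (H.neighborSet v).ncard = 2 * k' := by
  classical
  intro k' hk'
  rcases Nat.eq_zero_or_pos k with rfl | hk
  · exact ⟨⊥, bot_le, fun v => by simp [Nat.le_zero.1 hk']⟩
  have hG' : (G \ M.spanningCoe).IsRegularOfDegree (2 * k) := fun v => by
    rw [← ncard_neighborSet_eq_degree, ncard_neighborSet_sdiff_spanningCoe hM, hreg,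
      Nat.add_sub_cancel]
  obtain ⟨A, hAG, hA⟩ := hG'.exists_isOrientation_isDiregularOfDegree hk
  obtain ⟨B, hBA, hB⟩ := hA.exists_subset_of_le hk'
  have hB_asymm : ∀ ⦃x y⦄, (x, y) ∈ B → (y, x) ∉ B := fun _ _ hxy hyx =>
    hAG.asymm (hBA hxy) (hBA hyx)
  refine ⟨fromRel fun x y => (x, y) ∈ B, (hAG.fromRel_le hBA).trans sdiff_le, fun v => ?_⟩
  rw [ncard_neighborSet_eq_degree,
    ← (isOrientation_fromRel hB_asymm).card_outNbrs_add_card_inNbrs, (hB v).1, (hB v).2, two_mul]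
end

section
/- In a decomposition D of an ℓ-regular graph G (ℓ odd) into trails of length ℓ, no vertex can be the endpoint of two distinct elements of D, and every vertex is an endpoint of at least one element of D. -/
/-!
The edges at a vertex `v` are partitioned among the trails of `D`, so the numbers of edges of the
trails at `v` add up to `deg v = ℓ`, which is odd: `v` is an endpoint of some trail. Counting edges
twice, `|V| ℓ = 2 |E| = 2 |D| ℓ`, so `|V| = 2 |D|`. A trail has at most two endpoints, hence there
are at most `|V|` pairs `(v, T)` with `v` an endpoint of `T`; as every vertex lies in such a pair,
it lies in exactly one.
-/

open SimpleGraph Finset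

theorem Finset.eq_of_sum_card_filter_le_card {α β : Type*} [Fintype α] (s : Finset β)
    (R : β → α → Prop) [∀ b a, Decidable (R b a)] (hex : ∀ a, ∃ b ∈ s, R b a)
    (hsum : ∑ b ∈ s, #{a | R b a} ≤ Fintype.card α) {a : α} {b₁ b₂ : β} (h₁ : b₁ ∈ s)
    (h₂ : b₂ ∈ s) (hb₁ : R b₁ a) (hb₂ : R b₂ a) : b₁ = b₂ := by
  by_contra hne
  have hdouble : ∑ b ∈ s, #{a | R b a} = ∑ a, #{b ∈ s | R b a} :=
    sum_card_bipartiteAbove_eq_sum_card_bipartiteBelow R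
  have hlt : ∑ _a : α, 1 < ∑ a, #{b ∈ s | R b a} := by
    refine sum_lt_sum (fun a _ => ?_) ⟨a, mem_univ a, ?_⟩
    · obtain ⟨b, hb, hba⟩ := hex a
      exact card_pos.2 ⟨b, mem_filter.2 ⟨hb, hba⟩⟩
    · exact one_lt_card.2 ⟨b₁, mem_filter.2 ⟨h₁, hb₁⟩, b₂, mem_filter.2 ⟨h₂, hb₂⟩, hne⟩
  rw [sum_const, card_univ, smul_eq_mul, mul_one, ← hdouble] at hlt
  exact hsum.not_gt hlt

namespace SimpleGraph

variable {V : Type*} {G : SimpleGraph V}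

theorem finite_of_existsUnique_mem_edges [Finite V] {D : Set (Σ u v, G.Walk u v)}
    (hpos : ∀ T ∈ D, 0 < T.2.2.length)
    (hcover : ∀ e ∈ G.edgeSet, ∃! T, T ∈ D ∧ e ∈ T.2.2.edges) : D.Finite := by
  classical
  refine Set.Finite.of_finite_image (f := fun T => T.2.2.edges.toFinset) (Set.toFinite _) ?_
  intro T₁ h₁ T₂ h₂ hedges
  obtain ⟨e, he⟩ := List.exists_mem_of_length_pos (T₁.2.2.length_edges ▸ hpos T₁ h₁)
  have he₂ : e ∈ T₂.2.2.edges := by simpa [hedges] using List.mem_toFinset.2 he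
  exact (hcover e (T₁.2.2.edges_subset_edgeSet he)).unique ⟨h₁, he⟩ ⟨h₂, he₂⟩

variable [DecidableEq V] [Fintype G.edgeSet] {D : Finset (Σ u v, G.Walk u v)}

theorem sum_edges_eq_edgeFinset (htrail : ∀ T ∈ D, T.2.2.IsTrail)
    (hcover : ∀ e ∈ G.edgeSet, ∃! T, T ∈ D ∧ e ∈ T.2.2.edges) :
    ∑ T ∈ D, (T.2.2.edges : Multiset (Sym2 V)) = G.edgeFinset.val := by
  ext e
  have hcount : ∀ T ∈ D, Multiset.count e T.2.2.edges = if e ∈ T.2.2.edges then 1 else 0 :=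
    fun T hT => Multiset.count_eq_of_nodup (Multiset.coe_nodup.2 (htrail T hT).edges_nodup)
  rw [Multiset.count_sum', sum_congr rfl hcount, sum_boole, Nat.cast_id,
    Multiset.count_eq_of_nodup G.edgeFinset.nodup]
  by_cases he : e ∈ G.edgeSet
  · simp only [Finset.mem_val, mem_edgeFinset, he, if_true]
    exact card_eq_one_iff_existsUnique.2 (by simpa using hcover e he)
  · simp only [Finset.mem_val, mem_edgeFinset, he, if_false, card_eq_zero, filter_eq_empty_iff]
    exact fun T _ heT => he (T.2.2.edges_subset_edgeSet heT)

theorem sum_length_eq_card_edgeFinset (htrail : ∀ T ∈ D, T.2.2.IsTrail)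
    (hcover : ∀ e ∈ G.edgeSet, ∃! T, T ∈ D ∧ e ∈ T.2.2.edges) :
    ∑ T ∈ D, T.2.2.length = #G.edgeFinset := by
  simpa [Multiset.card_sum] using congrArg Multiset.card (sum_edges_eq_edgeFinset htrail hcover)

theorem sum_countP_mem_edges_eq_degree (htrail : ∀ T ∈ D, T.2.2.IsTrail)
    (hcover : ∀ e ∈ G.edgeSet, ∃! T, T ∈ D ∧ e ∈ T.2.2.edges) (v : V)
    [Fintype (G.neighborSet v)] :
    ∑ T ∈ D, T.2.2.edges.countP (v ∈ ·) = G.degree v :=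
  calc ∑ T ∈ D, T.2.2.edges.countP (v ∈ ·)
      = Multiset.countP (v ∈ ·) (∑ T ∈ D, (T.2.2.edges : Multiset (Sym2 V))) := by
        rw [← Multiset.coe_countPAddMonoidHom, map_sum]; rfl
    _ = #{e ∈ G.edgeFinset | v ∈ e} := by
        rw [sum_edges_eq_edgeFinset htrail hcover, Multiset.countP_eq_card_filter]; rfl
    _ = G.degree v := by rw [← incidenceFinset_eq_filter, card_incidenceFinset_eq_degree]

end SimpleGraph

theorem SimpleGraph.Walk.IsTrail.card_filter_odd_countP_le_two {V : Type*} [Fintype V]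
    [DecidableEq V] {G : SimpleGraph V} {u w : V} {p : G.Walk u w} (hp : p.IsTrail) :
    #{x | Odd (p.edges.countP (x ∈ ·))} ≤ 2 := by
  have hsub : ({x | Odd (p.edges.countP (x ∈ ·))} : Finset V) ⊆ {u, w} := by
    intro x hx
    have hend := mt (hp.even_countP_edges_iff x).2 (Nat.not_even_iff_odd.2 (mem_filter.1 hx).2)
    push Not at hend
    rw [mem_insert, mem_singleton]
    exact or_iff_not_imp_left.2 hend.2
  exact (card_le_card hsub).trans card_le_two

/-- In a decomposition `D` of an `ℓ`-regular graph `G` (`ℓ` odd) into trails of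
length `ℓ`, no vertex can be the endpoint of two distinct elements of `D`, and every vertex is
an endpoint of at least one element of `D`. (A vertex is an endpoint of a trail `T` when it has
odd degree in `T`, i.e. an odd number of edges of `T` are incident to it.) -/
theorem stmt_18 {V : Type*} [Fintype V] [DecidableEq V]
    (G : SimpleGraph V) (ℓ : ℕ) (hodd : Odd ℓ)
    (hreg : ∀ v : V, (G.neighborSet v).ncard = ℓ)
    (D : Set (Σ u : V, Σ v : V, G.Walk u v))
    (htrails : ∀ T ∈ D, T.2.2.IsTrail ∧ T.2.2.length = ℓ)
    (hcover : ∀ e ∈ G.edgeSet, ∃! T, T ∈ D ∧ e ∈ T.2.2.edges) :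
    ∀ v : V,
      (∀ T₁ ∈ D, ∀ T₂ ∈ D,
        Odd (T₁.2.2.edges.countP (fun e => v ∈ e)) →
        Odd (T₂.2.2.edges.countP (fun e => v ∈ e)) → T₁ = T₂) ∧
      (∃ T ∈ D, Odd (T.2.2.edges.countP (fun e => v ∈ e))) := by
  classical
  obtain ⟨D, rfl⟩ := (finite_of_existsUnique_mem_edges
    (fun T hT => (htrails T hT).2 ▸ hodd.pos) hcover).exists_finset_coe
  have htrail : ∀ T ∈ D, T.2.2.IsTrail := fun T hT => (htrails T hT).1
  have hdeg : ∀ v, G.degree v = ℓ := fun v => by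
    rw [← hreg v, degree, neighborFinset_def, Set.ncard_eq_toFinset_card']
  have hex : ∀ v, ∃ T ∈ D, Odd (T.2.2.edges.countP (v ∈ ·)) := by
    intro v
    by_contra! heven
    have hsum_even : Even (∑ T ∈ D, T.2.2.edges.countP (v ∈ ·)) :=
      even_sum _ fun T hT => Nat.not_odd_iff_even.1 (heven T hT)
    rw [sum_countP_mem_edges_eq_degree htrail hcover, hdeg] at hsum_even
    exact Nat.not_even_iff_odd.2 hodd hsum_even
  have hcard : Fintype.card V = 2 * #D := by
    refine Nat.eq_of_mul_eq_mul_right hodd.pos ?_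
    calc Fintype.card V * ℓ = ∑ v, G.degree v := by simp [hdeg]
      _ = 2 * ∑ T ∈ D, T.2.2.length := by
        rw [sum_degrees_eq_twice_card_edges, sum_length_eq_card_edgeFinset htrail hcover]
      _ = 2 * #D * ℓ := by
        rw [sum_congr rfl fun T hT => (htrails T hT).2, sum_const, smul_eq_mul, mul_assoc]
  refine fun v => ⟨fun T₁ h₁ T₂ h₂ => eq_of_sum_card_filter_le_card D
    (fun T x => Odd (T.2.2.edges.countP (x ∈ ·))) hex ?_ h₁ h₂, hex v⟩
  calc ∑ T ∈ D, #{x | Odd (T.2.2.edges.countP (x ∈ ·))}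
      ≤ ∑ _T ∈ D, 2 := sum_le_sum fun T hT => (htrail T hT).card_filter_odd_countP_le_two
    _ = Fintype.card V := by rw [sum_const, smul_eq_mul, hcard, mul_comm]
end
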